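/- arXiv:2511.15254 — 10 statements merged into one kernel-verified Lean document; each statement's English description precedes it below -/
import Mathlib

section
/- Let F : ℝ^n → ℝ^n be componentwise Lipschitz continuous with constants l_1, …, l_n > 0, let ρ ∈ (0,1), let i ∈ {1,…,n}, and let x ∈ ℝ^n. Define the mini-extragradient step y = x − (ρ/l_i) F_i(x) e_i. Then the inner product ⟨F(y), x − y⟩ satisfies ⟨F(y), x − y⟩ ≥ (ρ(1−ρ)/l_i) |F_i(x)|². -/
open scoped InnerProductSpace

/-- Lemma 3.5: if `F` is componentwise Lipschitz with constants `l`, the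
mini-extragradient step `y = x - (ρ / lᵢ) Fᵢ(x) eᵢ` satisfies
`⟨F(y), x - y⟩ ≥ (ρ(1-ρ)/lᵢ) |Fᵢ(x)|²`. -/
theorem stmt_2 {n : ℕ} (F : EuclideanSpace ℝ (Fin n) → EuclideanSpace ℝ (Fin n))
    (l : Fin n → ℝ) (hl : ∀ i, 0 < l i)
    (hCLip : ∀ (i : Fin n) (x : EuclideanSpace ℝ (Fin n)) (t : ℝ),
      |F (x + EuclideanSpace.single i t) i - F x i| ≤ l i * |t|)
    (ρ : ℝ) (hρ : ρ ∈ Set.Ioo (0 : ℝ) 1)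
    (i : Fin n) (x y : EuclideanSpace ℝ (Fin n))
    (hy : y = x - EuclideanSpace.single i (ρ / l i * F x i)) :
    ρ * (1 - ρ) / l i * |F x i| ^ 2 ≤ ⟪F y, x - y⟫_ℝ := by
  obtain ⟨hρ0, hρ1⟩ := hρ
  have hli := hl i
  set t : ℝ := ρ / l i * F x i with ht
  have hx : x = y + EuclideanSpace.single i t := by
    rw [hy]; abel
  have hxy : x - y = EuclideanSpace.single i t := by
    rw [hy]; abel
  have hlip : |F x i - F y i| ≤ ρ * |F x i| := by
    have := hCLip i y t
    rw [← hx] at this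
    calc |F x i - F y i| ≤ l i * |t| := this
      _ = ρ * |F x i| := by
          rw [ht, abs_mul, abs_div, abs_of_pos hρ0, abs_of_pos hli]
          field_simp
  have hinner : ⟪F y, x - y⟫_ℝ = t * F y i := by
    rw [hxy, EuclideanSpace.inner_single_right]
    simp
  rw [hinner, ht]
  have key : (1 - ρ) * |F x i| ^ 2 ≤ F x i * F y i := by
    have h1 : F x i * F x i - F x i * F y i ≤ |F x i| * (ρ * |F x i|) := by
      calc F x i * F x i - F x i * F y i = F x i * (F x i - F y i) := by ring
        _ ≤ |F x i * (F x i - F y i)| := le_abs_self _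
        _ = |F x i| * |F x i - F y i| := abs_mul _ _
        _ ≤ |F x i| * (ρ * |F x i|) := by
            exact mul_le_mul_of_nonneg_left hlip (abs_nonneg _)
    nlinarith [sq_abs (F x i)]
  have hc : (0:ℝ) < ρ / l i := div_pos hρ0 hli
  calc ρ * (1 - ρ) / l i * |F x i| ^ 2
      = (ρ / l i) * ((1 - ρ) * |F x i| ^ 2) := by ring
    _ ≤ (ρ / l i) * (F x i * F y i) := by
        exact mul_le_mul_of_nonneg_left key hc.le
    _ = ρ / l i * F x i * F y i := by ring
end

section
/- Let F : ℝ^n → ℝ^n be componentwise Lipschitz continuous with constants l_1, …, l_n > 0, let ρ ∈ (0,1), let i ∈ {1,…,n}, and let x ∈ ℝ^n. Define the mini-extragradient step y = x − (ρ/l_i) F_i(x) e_i. Then ⟨F(x) − F(y), x − y⟩ ≤ (ρ²/l_i) |F_i(x)|². -/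
open scoped InnerProductSpace

/-- Intermediate bound in Lemma 3.5: if `F` is componentwise Lipschitz with
constants `l`, the mini-extragradient step `y = x - (ρ / lᵢ) Fᵢ(x) eᵢ` satisfies
`⟨F(x) - F(y), x - y⟩ ≤ (ρ²/lᵢ) |Fᵢ(x)|²`. -/
theorem stmt_3 {n : ℕ} (F : EuclideanSpace ℝ (Fin n) → EuclideanSpace ℝ (Fin n))
    (l : Fin n → ℝ) (hl : ∀ i, 0 < l i)
    (hCLip : ∀ (i : Fin n) (x : EuclideanSpace ℝ (Fin n)) (t : ℝ),
      |F (x + EuclideanSpace.single i t) i - F x i| ≤ l i * |t|)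
    (ρ : ℝ) (hρ : ρ ∈ Set.Ioo (0 : ℝ) 1)
    (i : Fin n) (x y : EuclideanSpace ℝ (Fin n))
    (hy : y = x - EuclideanSpace.single i (ρ / l i * F x i)) :
    ⟪F x - F y, x - y⟫_ℝ ≤ ρ ^ 2 / l i * |F x i| ^ 2 := by
  set t : ℝ := ρ / l i * F x i with ht
  have hxy : x - y = EuclideanSpace.single i t := by rw [hy]; abel
  have hx : x = y + EuclideanSpace.single i t := by rw [hy]; abel
  have hlip : |F x i - F y i| ≤ l i * |t| := by
    have := hCLip i y t
    rwa [← hx] at this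
  have hinner : ⟪F x - F y, x - y⟫_ℝ = (F x i - F y i) * t := by
    rw [hxy, EuclideanSpace.inner_single_right]
    simp [mul_comm]
  rw [hinner]
  have h1 : (F x i - F y i) * t ≤ |F x i - F y i| * |t| := by
    calc (F x i - F y i) * t ≤ |(F x i - F y i) * t| := le_abs_self _
    _ = |F x i - F y i| * |t| := abs_mul _ _
  have h2 : |F x i - F y i| * |t| ≤ (l i * |t|) * |t| :=
    mul_le_mul_of_nonneg_right hlip (abs_nonneg _)
  have hli := hl i
  have hρ0 : 0 < ρ := hρ.1
  have htabs : |t| = ρ / l i * |F x i| := by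
    rw [ht, abs_mul, abs_of_pos (by positivity : (0:ℝ) < ρ / l i)]
  calc (F x i - F y i) * t ≤ (l i * |t|) * |t| := h1.trans h2
  _ = ρ ^ 2 / l i * |F x i| ^ 2 := by rw [htabs]; field_simp
end

section
/- Let F : ℝ^n → ℝ^n be monotone, L-Lipschitz continuous, and componentwise Lipschitz continuous with constants l_1, …, l_n > 0. Let x* ∈ ℝ^n satisfy F(x*) = 0 and let P : ℝ^n → ℝ^n be 1-Lipschitz with P(x*) = x*. Fix ρ ∈ (0,1), i ∈ {1,…,n}, and x ∈ ℝ^n; define y = x − (ρ/l_i) F_i(x) e_i, assume F(y) ≠ 0, set β = ⟨F(y), x − y⟩ / ‖F(y)‖², and x⁺ = P(x − β F(y)). Then ‖x − x*‖² − ‖x⁺ − x*‖² ≥ ( ρ(1−ρ)|F_i(x)|² / ( l_i‖F(x)‖ + ρL|F_i(x)| ) )². -/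
open scoped InnerProductSpace

set_option maxHeartbeats 1000000 in
/-- Per-step estimate in Lemma 3.6: for monotone, `L`-Lipschitz, componentwise
Lipschitz `F`, the mini-extragradient step at coordinate `i` followed by the
adaptive update satisfies
`‖x - x*‖² - ‖x⁺ - x*‖² ≥ (ρ(1-ρ)|Fᵢ(x)|² / (lᵢ‖F(x)‖ + ρL|Fᵢ(x)|))²`. -/
theorem stmt_6 {n : ℕ} (F : EuclideanSpace ℝ (Fin n) → EuclideanSpace ℝ (Fin n))
    (hmono : ∀ x y : EuclideanSpace ℝ (Fin n), 0 ≤ ⟪F x - F y, x - y⟫_ℝ)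
    (L : ℝ) (hL : 0 < L)
    (hLip : ∀ x y : EuclideanSpace ℝ (Fin n), ‖F x - F y‖ ≤ L * ‖x - y‖)
    (l : Fin n → ℝ) (hl : ∀ i, 0 < l i)
    (hCLip : ∀ (i : Fin n) (x : EuclideanSpace ℝ (Fin n)) (t : ℝ),
      |F (x + EuclideanSpace.single i t) i - F x i| ≤ l i * |t|)
    (xstar : EuclideanSpace ℝ (Fin n)) (hstar : F xstar = 0)
    (P : EuclideanSpace ℝ (Fin n) → EuclideanSpace ℝ (Fin n))
    (hP : ∀ x y : EuclideanSpace ℝ (Fin n), ‖P x - P y‖ ≤ ‖x - y‖)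
    (hPfix : P xstar = xstar)
    (ρ : ℝ) (hρ : ρ ∈ Set.Ioo (0 : ℝ) 1)
    (i : Fin n) (x y : EuclideanSpace ℝ (Fin n))
    (hy : y = x - EuclideanSpace.single i (ρ / l i * F x i))
    (hFy : F y ≠ 0)
    (β : ℝ) (hβ : β = ⟪F y, x - y⟫_ℝ / ‖F y‖ ^ 2)
    (xplus : EuclideanSpace ℝ (Fin n)) (hxplus : xplus = P (x - β • F y)) :
    (ρ * (1 - ρ) * |F x i| ^ 2 / (l i * ‖F x‖ + ρ * L * |F x i|)) ^ 2 ≤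
      ‖x - xstar‖ ^ 2 - ‖xplus - xstar‖ ^ 2 := by
  obtain ⟨hρ0, hρ1⟩ := hρ
  have hli := hl i
  have hNy : (0:ℝ) < ‖F y‖ := norm_pos_iff.mpr hFy
  set t : ℝ := ρ / l i * F x i with ht
  have hsn : EuclideanSpace.single i (-t) = - EuclideanSpace.single i t := by
    ext j; simp [EuclideanSpace.single_apply]; split <;> ring
  have hxy : x - y = EuclideanSpace.single i t := by rw [hy]; abel
  set c : ℝ := ⟪F y, x - y⟫_ℝ with hc
  have hc' : c = t * F y i := by
    rw [hc, hxy, EuclideanSpace.inner_single_right]; simp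
  -- componentwise bound
  have hy' : y = x + EuclideanSpace.single i (-t) := by rw [hy, hsn]; abel
  have hcomp : |F y i - F x i| ≤ ρ * |F x i| := by
    have h := hCLip i x (-t)
    rw [← hy'] at h
    calc |F y i - F x i| ≤ l i * |(-t)| := h
      _ = ρ * |F x i| := by
          rw [abs_neg, ht, abs_mul, abs_div, abs_of_pos hρ0, abs_of_pos hli]
          field_simp
  have habs : |F x i * (F y i - F x i)| ≤ ρ * (F x i)^2 := by
    rw [abs_mul]
    calc |F x i| * |F y i - F x i| ≤ |F x i| * (ρ * |F x i|) :=
          mul_le_mul_of_nonneg_left hcomp (abs_nonneg _)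
      _ = ρ * (F x i)^2 := by rw [← sq_abs]; ring
  have hclow : (1 - ρ) * (ρ / l i) * |F x i|^2 ≤ c := by
    rw [hc', ht, sq_abs]
    nlinarith [neg_abs_le (F x i * (F y i - F x i)), habs, div_pos hρ0 hli]
  have hc0 : 0 ≤ c := by
    refine le_trans ?_ hclow
    have h1ρ : (0:ℝ) ≤ 1 - ρ := by linarith
    positivity
  -- projection inequality
  have h4 : ‖xplus - xstar‖ ≤ ‖x - β • F y - xstar‖ := by
    rw [hxplus]; calc ‖P (x - β • F y) - xstar‖ = ‖P (x - β • F y) - P xstar‖ := by rw [hPfix]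
      _ ≤ ‖x - β • F y - xstar‖ := hP _ _
  have hrw : x - β • F y - xstar = (x - xstar) - β • F y := by abel
  have hexp : ‖x - β • F y - xstar‖^2 =
      ‖x - xstar‖^2 - 2 * β * ⟪F y, x - xstar⟫_ℝ + β^2 * ‖F y‖^2 := by
    rw [hrw, norm_sub_sq_real, real_inner_smul_right, norm_smul, real_inner_comm]
    simp [mul_pow, sq_abs]; ring
  have hmono' : c ≤ ⟪F y, x - xstar⟫_ℝ := by
    have h := hmono y xstar
    rw [hstar, sub_zero] at h
    have hsplit : ⟪F y, x - xstar⟫_ℝ = c + ⟪F y, y - xstar⟫_ℝ := by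
      rw [hc, ← inner_add_right]
      congr 1; abel
    rw [hsplit]; linarith
  have hβval : β = c / ‖F y‖^2 := by rw [hβ, hc]
  have hβ0 : 0 ≤ β := hβval ▸ div_nonneg hc0 (sq_nonneg _)
  have hdiff : (c / ‖F y‖)^2 ≤ ‖x - xstar‖^2 - ‖xplus - xstar‖^2 := by
    have h5 : ‖xplus - xstar‖^2 ≤ ‖x - β • F y - xstar‖^2 :=
      pow_le_pow_left₀ (norm_nonneg _) h4 2
    have h6 : 2 * β * c - β^2 * ‖F y‖^2 = (c / ‖F y‖)^2 := by
      rw [hβval]; field_simp; ring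
    have h7 := mul_le_mul_of_nonneg_left hmono' (by linarith : (0:ℝ) ≤ 2 * β)
    linarith [hexp, h5, h6, h7]
  -- bound ‖F y‖
  have hNbound : l i * ‖F y‖ ≤ l i * ‖F x‖ + ρ * L * |F x i| := by
    have h7 : ‖F y - F x‖ ≤ L * ‖y - x‖ := hLip y x
    have h8 : ‖y - x‖ = (ρ / l i) * |F x i| := by
      have : y - x = EuclideanSpace.single i (-t) := by rw [hy']; abel
      rw [this, EuclideanSpace.norm_single, Real.norm_eq_abs, abs_neg, ht, abs_mul,
        abs_div, abs_of_pos hρ0, abs_of_pos hli]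
    calc l i * ‖F y‖ ≤ l i * (‖F x‖ + ‖F y - F x‖) := by
          have h9 : ‖F y‖ ≤ ‖F x‖ + ‖F y - F x‖ := by
            calc ‖F y‖ = ‖F x + (F y - F x)‖ := by congr 1; abel
              _ ≤ ‖F x‖ + ‖F y - F x‖ := norm_add_le _ _
          exact mul_le_mul_of_nonneg_left h9 hli.le
      _ ≤ l i * (‖F x‖ + L * (ρ / l i * |F x i|)) := by
          have hb : ‖F y - F x‖ ≤ L * (ρ / l i * |F x i|) := by rw [← h8]; exact h7
          exact mul_le_mul_of_nonneg_left (by linarith) hli.le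
      _ = l i * ‖F x‖ + ρ * L * |F x i| := by field_simp
  -- final comparison
  refine le_trans ?_ hdiff
  rcases eq_or_ne (F x i) 0 with h0 | h0
  · simp [h0]; positivity
  · have hFxi : 0 < |F x i| := abs_pos.mpr h0
    have hD : 0 < l i * ‖F x‖ + ρ * L * |F x i| := by
      have h1 : 0 < ρ * L * |F x i| := by positivity
      linarith [mul_nonneg hli.le (norm_nonneg (F x))]
    have hA0 : (0:ℝ) ≤ ρ * (1 - ρ) * |F x i|^2 := by
      have h1ρ : (0:ℝ) ≤ 1 - ρ := by linarith
      positivity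
    have hliN : 0 < l i * ‖F y‖ := by positivity
    have step1 : ρ * (1 - ρ) * |F x i|^2 / (l i * ‖F x‖ + ρ * L * |F x i|) ≤
        ρ * (1 - ρ) * |F x i|^2 / (l i * ‖F y‖) :=
      div_le_div_of_nonneg_left hA0 hliN hNbound
    have step2 : ρ * (1 - ρ) * |F x i|^2 / (l i * ‖F y‖) ≤ c / ‖F y‖ := by
      rw [div_le_div_iff₀ hliN hNy]
      have h := mul_le_mul_of_nonneg_right hclow hliN.le
      have key : (1 - ρ) * (ρ / l i) * |F x i|^2 * (l i * ‖F y‖)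
          = ρ * (1 - ρ) * |F x i|^2 * ‖F y‖ := by field_simp
      have key2 : c * (l i * ‖F y‖) = c / ‖F y‖ * (l i * ‖F y‖) * ‖F y‖ := by
        field_simp
      linarith [h, key, key2]
    have hnn : 0 ≤ ρ * (1 - ρ) * |F x i|^2 / (l i * ‖F x‖ + ρ * L * |F x i|) :=
      div_nonneg hA0 hD.le
    exact pow_le_pow_left₀ hnn (le_trans step1 step2) 2
end

section
/- Let F : ℝ^n → ℝ^n be monotone, L-Lipschitz continuous, and componentwise Lipschitz continuous with constants l_1, …, l_n > 0, and set l_max = max_{1≤i≤n} l_i. Let x* ∈ ℝ^n satisfy F(x*) = 0 and let P : ℝ^n → ℝ^n be 1-Lipschitz with P(x*) = x*. Fix ρ ∈ (0,1). Let {x_k} and {y_k} be generated by the Greedy Mini-EG method: i_k is an index maximizing |F_i(x_k)| over i ∈ {1,…,n}, y_k = x_k − (ρ/l_{i_k}) F_{i_k}(x_k) e_{i_k}, β_k = ⟨F(y_k), x_k − y_k⟩ / ‖F(y_k)‖², and x_{k+1} = P(x_k − β_k F(y_k)), where F(y_k) ≠ 0 for all k. Then for all k ≥ 0: ‖x_k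 − x*‖² − ‖x_{k+1} − x*‖² ≥ ρ²(1−ρ)² / (√n · l_max + ρL)² · ‖F(x_k)‖_∞². -/
set_option maxHeartbeats 1000000

open scoped InnerProductSpace

/-- Lemma 3.6: per-iteration decrease of the Greedy Mini-EG method,
`‖x_k - x*‖² - ‖x_{k+1} - x*‖² ≥ ρ²(1-ρ)²/(√n l_max + ρL)² ‖F(x_k)‖_∞²`. -/
theorem stmt_7 {n : ℕ} (F : EuclideanSpace ℝ (Fin n) → EuclideanSpace ℝ (Fin n))
    (hmono : ∀ x y : EuclideanSpace ℝ (Fin n), 0 ≤ ⟪F x - F y, x - y⟫_ℝ)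
    (L : ℝ) (hL : 0 < L)
    (hLip : ∀ x y : EuclideanSpace ℝ (Fin n), ‖F x - F y‖ ≤ L * ‖x - y‖)
    (l : Fin n → ℝ) (hl : ∀ i, 0 < l i)
    (hCLip : ∀ (i : Fin n) (x : EuclideanSpace ℝ (Fin n)) (t : ℝ),
      |F (x + EuclideanSpace.single i t) i - F x i| ≤ l i * |t|)
    (lmax : ℝ) (hlmax : IsGreatest (Set.range l) lmax)
    (xstar : EuclideanSpace ℝ (Fin n)) (hstar : F xstar = 0)
    (P : EuclideanSpace ℝ (Fin n) → EuclideanSpace ℝ (Fin n))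
    (hP : ∀ x y : EuclideanSpace ℝ (Fin n), ‖P x - P y‖ ≤ ‖x - y‖)
    (hPfix : P xstar = xstar)
    (ρ : ℝ) (hρ : ρ ∈ Set.Ioo (0 : ℝ) 1)
    (x y : ℕ → EuclideanSpace ℝ (Fin n)) (ik : ℕ → Fin n) (β : ℕ → ℝ)
    (hik : ∀ (k : ℕ) (j : Fin n), |F (x k) j| ≤ |F (x k) (ik k)|)
    (hy : ∀ k, y k = x k - EuclideanSpace.single (ik k) (ρ / l (ik k) * F (x k) (ik k)))
    (hFy : ∀ k, F (y k) ≠ 0)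
    (hβ : ∀ k, β k = ⟪F (y k), x k - y k⟫_ℝ / ‖F (y k)‖ ^ 2)
    (hx : ∀ k, x (k + 1) = P (x k - β k • F (y k))) :
    ∀ k : ℕ,
      ρ ^ 2 * (1 - ρ) ^ 2 / (Real.sqrt n * lmax + ρ * L) ^ 2 * (⨆ j, |F (x k) j|) ^ 2 ≤
        ‖x k - xstar‖ ^ 2 - ‖x (k + 1) - xstar‖ ^ 2 := by
  intro k
  haveI hne : Nonempty (Fin n) := ⟨ik 0⟩
  have hρ0 : 0 < ρ := hρ.1
  have hρ1 : ρ < 1 := hρ.2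
  set i := ik k with hi
  have hli : 0 < l i := hl i
  have hlim : l i ≤ lmax := hlmax.2 ⟨i, rfl⟩
  set s : ℝ := ρ / l i * F (x k) i with hs
  have hxy : x k - y k = EuclideanSpace.single i s := by rw [hy k]; abel
  set M : ℝ := ⨆ j, |F (x k) j| with hMdef
  have hMi : M = |F (x k) i| :=
    le_antisymm (ciSup_le (hik k))
      (le_ciSup (Set.Finite.bddAbove (Set.finite_range (fun j => |F (x k) j|))) i)
  have hM0 : 0 ≤ M := hMi ▸ abs_nonneg _
  -- componentwise Lipschitz bound
  have hcomp : |F (x k) i - F (y k) i| ≤ ρ * |F (x k) i| := by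
    have h := hCLip i (y k) s
    have hyx : y k + EuclideanSpace.single i s = x k := by rw [hy k]; abel
    rw [hyx] at h
    calc |F (x k) i - F (y k) i| ≤ l i * |s| := h
      _ = ρ * |F (x k) i| := by
          rw [hs, abs_mul, abs_div, abs_of_pos hρ0, abs_of_pos hli]
          field_simp
  -- inner product lower bound
  set c : ℝ := ⟪F (y k), x k - y k⟫_ℝ with hc
  have hcval : c = ρ / l i * (F (x k) i * F (y k) i) := by
    rw [hc, hxy, hs, EuclideanSpace.inner_single_right]
    simp [mul_comm, mul_assoc]
  have hprod : (1 - ρ) * (F (x k) i) ^ 2 ≤ F (x k) i * F (y k) i := by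
    have h1 : F (x k) i * (F (x k) i - F (y k) i) ≤ |F (x k) i| * (ρ * |F (x k) i|) := by
      calc F (x k) i * (F (x k) i - F (y k) i) ≤ |F (x k) i * (F (x k) i - F (y k) i)| :=
            le_abs_self _
        _ = |F (x k) i| * |F (x k) i - F (y k) i| := abs_mul _ _
        _ ≤ |F (x k) i| * (ρ * |F (x k) i|) :=
            mul_le_mul_of_nonneg_left hcomp (abs_nonneg _)
    nlinarith [sq_abs (F (x k) i)]
  have hA : ρ * (1 - ρ) / l i * M ^ 2 ≤ c := by
    rw [hcval, hMi, sq_abs]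
    rw [div_mul_eq_mul_div, div_mul_eq_mul_div, div_le_div_iff₀ hli hli]
    nlinarith [mul_le_mul_of_nonneg_left hprod (mul_pos hρ0 hli).le]
  have hA0 : 0 ≤ ρ * (1 - ρ) / l i * M ^ 2 :=
    mul_nonneg (div_nonneg (mul_nonneg hρ0.le (by linarith)) hli.le) (sq_nonneg M)
  have hc0 : 0 ≤ c := le_trans hA0 hA
  -- norm of F y bound
  have hFy0 : 0 < ‖F (y k)‖ := norm_pos_iff.mpr (hFy k)
  have hnormFx : ‖F (x k)‖ ≤ Real.sqrt n * M := by
    have h1 : ‖F (x k)‖ = Real.sqrt (∑ j, (F (x k) j) ^ 2) := by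
      rw [EuclideanSpace.norm_eq]
      congr 1
      exact Finset.sum_congr rfl fun j _ => by rw [Real.norm_eq_abs, sq_abs]
    rw [h1]
    have h2 : (∑ j, (F (x k) j) ^ 2) ≤ (n : ℝ) * M ^ 2 := by
      calc (∑ j, (F (x k) j) ^ 2) ≤ ∑ _j : Fin n, M ^ 2 := by
            apply Finset.sum_le_sum
            intro j _
            have := hik k j
            rw [hMi]
            nlinarith [abs_nonneg (F (x k) j), sq_abs (F (x k) j), sq_abs (F (x k) i)]
        _ = (n : ℝ) * M ^ 2 := by simp [Finset.card_univ]
    calc Real.sqrt (∑ j, (F (x k) j) ^ 2) ≤ Real.sqrt ((n : ℝ) * M ^ 2) :=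
          Real.sqrt_le_sqrt h2
      _ = Real.sqrt n * M := by
          rw [Real.sqrt_mul (Nat.cast_nonneg n), Real.sqrt_sq hM0]
  set B : ℝ := (Real.sqrt n * lmax + ρ * L) / l i * M with hB
  have hsqrtn : (1:ℝ) ≤ Real.sqrt n := by
    rw [show (1:ℝ) = Real.sqrt 1 by simp]
    apply Real.sqrt_le_sqrt
    exact_mod_cast Nat.one_le_iff_ne_zero.mpr (by rintro rfl; exact (hne.elim fun j => j.elim0))
  have hlmax0 : 0 < lmax := hli.trans_le hlim
  have hdenom : 0 < Real.sqrt n * lmax + ρ * L :=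
    add_pos (mul_pos (by linarith) hlmax0) (mul_pos hρ0 hL)
  have hnormFyB : ‖F (y k)‖ ≤ B := by
    have h1 : ‖F (y k) - F (x k)‖ ≤ L * (ρ / l i * M) := by
      calc ‖F (y k) - F (x k)‖ ≤ L * ‖y k - x k‖ := hLip _ _
        _ = L * (ρ / l i * M) := by
            rw [show y k - x k = -(x k - y k) by abel, norm_neg, hxy,
              EuclideanSpace.norm_single, hs, Real.norm_eq_abs, abs_mul, abs_div,
              abs_of_pos hρ0, abs_of_pos hli, hMi]
    calc ‖F (y k)‖ = ‖F (x k) + (F (y k) - F (x k))‖ := by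
          rw [show F (x k) + (F (y k) - F (x k)) = F (y k) by abel]
      _ ≤ ‖F (x k)‖ + ‖F (y k) - F (x k)‖ := norm_add_le _ _
      _ ≤ Real.sqrt n * M + L * (ρ / l i * M) := add_le_add hnormFx h1
      _ ≤ B := by
          rw [hB]
          conv_rhs => rw [div_mul_eq_mul_div]
          rw [le_div_iff₀ hli]
          have h2 : Real.sqrt n * M * l i ≤ Real.sqrt n * M * lmax :=
            mul_le_mul_of_nonneg_left hlim
              (mul_nonneg (Real.sqrt_nonneg (n:ℝ)) hM0)
          have e : L * (ρ / l i * M) * l i = ρ * L * M := by field_simp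
          nlinarith [e, h2]
  -- EG decrease
  have hkey : c ^ 2 / ‖F (y k)‖ ^ 2 ≤ ‖x k - xstar‖ ^ 2 - ‖x (k + 1) - xstar‖ ^ 2 := by
    have hβk : β k = c / ‖F (y k)‖ ^ 2 := hβ k
    have hβ0 : 0 ≤ β k := by rw [hβk]; positivity
    have hmon : 0 ≤ ⟪F (y k), y k - xstar⟫_ℝ := by
      have := hmono (y k) xstar
      rwa [hstar, sub_zero] at this
    have hsplit : ⟪F (y k), x k - xstar⟫_ℝ = c + ⟪F (y k), y k - xstar⟫_ℝ := by
      rw [hc, ← inner_add_right]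
      congr 1
      abel
    have hstep : ‖x (k + 1) - xstar‖ ^ 2 ≤ ‖(x k - xstar) - β k • F (y k)‖ ^ 2 := by
      have h1 : ‖x (k + 1) - xstar‖ ≤ ‖(x k - xstar) - β k • F (y k)‖ := by
        have h2 := hP (x k - β k • F (y k)) xstar
        rw [hPfix] at h2
        rw [hx k]
        refine h2.trans (le_of_eq ?_)
        congr 1
        abel
      exact pow_le_pow_left₀ (norm_nonneg _) h1 2
    have hexp : ‖(x k - xstar) - β k • F (y k)‖ ^ 2
        = ‖x k - xstar‖ ^ 2 - 2 * β k * ⟪F (y k), x k - xstar⟫_ℝ + β k ^ 2 * ‖F (y k)‖ ^ 2 := by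
      rw [norm_sub_sq_real, real_inner_smul_right, norm_smul, Real.norm_eq_abs,
        mul_pow, sq_abs, real_inner_comm]
      ring
    have hcβ : β k * ‖F (y k)‖ ^ 2 = c := by
      rw [hβk]
      field_simp
    have hinner_ge : c ≤ ⟪F (y k), x k - xstar⟫_ℝ := by
      rw [hsplit]; linarith
    have : ‖x (k + 1) - xstar‖ ^ 2 ≤ ‖x k - xstar‖ ^ 2 - β k * c := by
      calc ‖x (k + 1) - xstar‖ ^ 2
          ≤ ‖x k - xstar‖ ^ 2 - 2 * β k * ⟪F (y k), x k - xstar⟫_ℝ + β k ^ 2 * ‖F (y k)‖ ^ 2 := by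
            rw [← hexp]; exact hstep
        _ ≤ ‖x k - xstar‖ ^ 2 - 2 * β k * c + β k * (β k * ‖F (y k)‖ ^ 2) := by
            have := mul_le_mul_of_nonneg_left hinner_ge (by linarith : (0:ℝ) ≤ 2 * β k)
            nlinarith
        _ = ‖x k - xstar‖ ^ 2 - β k * c := by rw [hcβ]; ring
    have hβc : β k * c = c ^ 2 / ‖F (y k)‖ ^ 2 := by
      rw [hβk]; field_simp
    linarith [hβc ▸ this]
  -- combine
  refine le_trans ?_ hkey
  by_cases hMz : M = 0
  · rw [hMz]
    simpa using div_nonneg (sq_nonneg c) (sq_nonneg ‖F (y k)‖)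
  · have hMpos : 0 < M := lt_of_le_of_ne hM0 (Ne.symm hMz)
    have hBpos : 0 < B := by rw [hB]; positivity
    have h1 : (ρ * (1 - ρ) / l i * M ^ 2) ^ 2 / B ^ 2 ≤ c ^ 2 / ‖F (y k)‖ ^ 2 := by
      apply div_le_div₀ (sq_nonneg c) (pow_le_pow_left₀ hA0 hA 2) (by positivity)
        (pow_le_pow_left₀ (norm_nonneg _) hnormFyB 2)
    refine le_trans (le_of_eq ?_) h1
    rw [hB]
    field_simp
end

section
/- Let F : ℝ^n → ℝ^n be monotone, L-Lipschitz continuous, and componentwise Lipschitz continuous with constants l_1, …, l_n > 0, and set l_max = max_{1≤i≤n} l_i. Let x* ∈ ℝ^n satisfy F(x*) = 0 and let P : ℝ^n → ℝ^n be 1-Lipschitz with P(x*) = x*. Fix ρ ∈ (0,1). Let {x_k} be generated by the Greedy Mini-EG method: i_k is an index maximizing |F_i(x_k)| over i ∈ {1,…,n}, y_k = x_k − (ρ/l_{i_k}) F_{i_k}(x_k) e_{i_k}, β_k = ⟨F(y_k), x_k − y_k⟩ / ‖F(y_k)‖², and x_{k+1} = P(x_k − β_k F(y_k)), where F(y_k)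 ≠ 0 for all k. Then for every integer K ≥ 0: min_{0≤k≤K} ‖F(x_k)‖_∞² ≤ (√n · l_max + ρL)² / (ρ²(1−ρ)²(K+1)) · ‖x_0 − x*‖². -/
open scoped InnerProductSpace

set_option maxHeartbeats 1000000 in
/-- Theorem 3.7 (rate): for the Greedy Mini-EG method, for every `K ≥ 0`,
`min_{0 ≤ k ≤ K} ‖F(x_k)‖_∞² ≤ (√n l_max + ρL)² / (ρ²(1-ρ)²(K+1)) ‖x_0 - x*‖²`. -/
theorem stmt_8 {n : ℕ} (F : EuclideanSpace ℝ (Fin n) → EuclideanSpace ℝ (Fin n))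
    (hmono : ∀ x y : EuclideanSpace ℝ (Fin n), 0 ≤ ⟪F x - F y, x - y⟫_ℝ)
    (L : ℝ) (hL : 0 < L)
    (hLip : ∀ x y : EuclideanSpace ℝ (Fin n), ‖F x - F y‖ ≤ L * ‖x - y‖)
    (l : Fin n → ℝ) (hl : ∀ i, 0 < l i)
    (hCLip : ∀ (i : Fin n) (x : EuclideanSpace ℝ (Fin n)) (t : ℝ),
      |F (x + EuclideanSpace.single i t) i - F x i| ≤ l i * |t|)
    (lmax : ℝ) (hlmax : IsGreatest (Set.range l) lmax)
    (xstar : EuclideanSpace ℝ (Fin n)) (hstar : F xstar = 0)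
    (P : EuclideanSpace ℝ (Fin n) → EuclideanSpace ℝ (Fin n))
    (hP : ∀ x y : EuclideanSpace ℝ (Fin n), ‖P x - P y‖ ≤ ‖x - y‖)
    (hPfix : P xstar = xstar)
    (ρ : ℝ) (hρ : ρ ∈ Set.Ioo (0 : ℝ) 1)
    (x y : ℕ → EuclideanSpace ℝ (Fin n)) (ik : ℕ → Fin n) (β : ℕ → ℝ)
    (hik : ∀ (k : ℕ) (j : Fin n), |F (x k) j| ≤ |F (x k) (ik k)|)
    (hy : ∀ k, y k = x k - EuclideanSpace.single (ik k) (ρ / l (ik k) * F (x k) (ik k)))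
    (hFy : ∀ k, F (y k) ≠ 0)
    (hβ : ∀ k, β k = ⟪F (y k), x k - y k⟫_ℝ / ‖F (y k)‖ ^ 2)
    (hx : ∀ k, x (k + 1) = P (x k - β k • F (y k))) :
    ∀ K : ℕ, ∃ k ≤ K,
      (⨆ j, |F (x k) j|) ^ 2 ≤
        (Real.sqrt n * lmax + ρ * L) ^ 2 / (ρ ^ 2 * (1 - ρ) ^ 2 * (K + 1)) *
          ‖x 0 - xstar‖ ^ 2 := by
  obtain ⟨⟨i₀, hi₀⟩, hub⟩ := hlmax
  haveI : Nonempty (Fin n) := ⟨i₀⟩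
  obtain ⟨hρ0, hρ1⟩ := hρ
  have hlmax_pos : 0 < lmax := hi₀ ▸ hl i₀
  have hn1 : (1 : ℝ) ≤ Real.sqrt n := by
    rw [show (1:ℝ) = Real.sqrt 1 by simp]
    exact Real.sqrt_le_sqrt (by exact_mod_cast Nat.one_le_iff_ne_zero.mpr (by
      rintro rfl; exact absurd i₀.2 (by simp)))
  set A : ℝ := Real.sqrt n * lmax + ρ * L with hA
  have hApos : 0 < A := by nlinarith
  set c : ℝ := ρ ^ 2 * (1 - ρ) ^ 2 / A ^ 2 with hc
  have hcpos : 0 < c := by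
    apply div_pos _ (pow_pos hApos 2)
    have : 0 < 1 - ρ := by linarith
    positivity
  -- key per-step inequality
  have key : ∀ k, ‖x (k + 1) - xstar‖ ^ 2 + c * (F (x k) (ik k)) ^ 2
      ≤ ‖x k - xstar‖ ^ 2 := by
    intro k
    set i := ik k with hi
    set a : ℝ := F (x k) i with ha
    set li : ℝ := l i with hli'
    have hli : 0 < li := hl i
    have hlile : li ≤ lmax := hub ⟨i, rfl⟩
    have hxy : x k - y k = EuclideanSpace.single i (ρ / li * a) := by
      rw [hy k]; abel
    have hnormxy : ‖x k - y k‖ = ρ / li * |a| := by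
      rw [hxy, EuclideanSpace.norm_single, Real.norm_eq_abs, abs_mul,
        abs_of_pos (by positivity : (0:ℝ) < ρ / li)]
    -- componentwise Lipschitz
    have hcomp : |a - F (y k) i| ≤ ρ * |a| := by
      have hxk : y k + EuclideanSpace.single i (ρ / li * a) = x k := by
        rw [hy k]; abel
      have h := hCLip i (y k) (ρ / li * a)
      rw [hxk] at h
      calc |a - F (y k) i| = |F (x k) i - F (y k) i| := rfl
        _ ≤ li * |ρ / li * a| := h
        _ = ρ * |a| := by
            rw [abs_mul, abs_of_pos (by positivity : (0:ℝ) < ρ / li)]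
            field_simp
    -- inner product lower bound
    have hinner : ρ * (1 - ρ) / li * a ^ 2 ≤ ⟪F (y k), x k - y k⟫_ℝ := by
      rw [hxy, EuclideanSpace.inner_single_right]
      simp only [RCLike.conj_to_real, starRingEnd_apply, star_trivial]
      have h2 : (1 - ρ) * a ^ 2 ≤ a * F (y k) i := by
        nlinarith [le_abs_self (a * (a - F (y k) i)), abs_mul a (a - F (y k) i),
          mul_le_mul_of_nonneg_left hcomp (abs_nonneg a), sq_abs a]
      calc ρ * (1 - ρ) / li * a ^ 2 = ρ / li * ((1 - ρ) * a ^ 2) := by ring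
        _ ≤ ρ / li * (a * F (y k) i) :=
            mul_le_mul_of_nonneg_left h2 (le_of_lt (div_pos hρ0 hli))
        _ = ρ / li * a * F (y k) i := by ring
    have hinner0 : 0 ≤ ⟪F (y k), x k - y k⟫_ℝ := by
      refine le_trans ?_ hinner
      have : 0 < 1 - ρ := by linarith
      positivity
    -- norm bounds
    have hFxk : ‖F (x k)‖ ≤ Real.sqrt n * |a| := by
      rw [EuclideanSpace.norm_eq]
      have hsum : ∑ j, ‖F (x k) j‖ ^ 2 ≤ (n : ℝ) * a ^ 2 := by
        calc ∑ j, ‖F (x k) j‖ ^ 2 ≤ ∑ _j : Fin n, a ^ 2 := by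
              apply Finset.sum_le_sum
              intro j _
              rw [Real.norm_eq_abs, ← sq_abs a]
              exact pow_le_pow_left₀ (abs_nonneg _) (hik k j) 2
          _ = (n : ℝ) * a ^ 2 := by simp
      calc Real.sqrt (∑ j, ‖F (x k) j‖ ^ 2) ≤ Real.sqrt ((n : ℝ) * a ^ 2) :=
            Real.sqrt_le_sqrt hsum
        _ = Real.sqrt n * |a| := by
            rw [Real.sqrt_mul (Nat.cast_nonneg n), Real.sqrt_sq_eq_abs]
    have hFyk : ‖F (y k)‖ ≤ A * |a| / li := by
      have h1 : ‖F (y k)‖ ≤ ‖F (x k)‖ + ‖F (y k) - F (x k)‖ := by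
        have := norm_add_le (F (x k)) (F (y k) - F (x k))
        simpa using this
      have h2 : ‖F (y k) - F (x k)‖ ≤ L * (ρ / li * |a|) := by
        rw [← hnormxy]
        calc ‖F (y k) - F (x k)‖ ≤ L * ‖y k - x k‖ := hLip _ _
          _ = L * ‖x k - y k‖ := by rw [norm_sub_rev]
      have h3 : Real.sqrt n * |a| + L * (ρ / li * |a|) ≤ A * |a| / li := by
        rw [le_div_iff₀ hli, hA]
        have e : L * (ρ / li * |a|) * li = L * ρ * |a| := by field_simp
        nlinarith [mul_le_mul_of_nonneg_left hlile
          (mul_nonneg (Real.sqrt_nonneg (n:ℝ)) (abs_nonneg a))]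
      linarith
    have hFynorm : (0:ℝ) < ‖F (y k)‖ := norm_pos_iff.mpr (hFy k)
    have hβval : β k * ‖F (y k)‖ ^ 2 = ⟪F (y k), x k - y k⟫_ℝ := by
      rw [hβ k]; field_simp
    have hβnn : 0 ≤ β k := by
      rw [hβ k]; exact div_nonneg hinner0 (by positivity)
    -- contraction step
    have hdec : ‖x (k+1) - xstar‖ ^ 2 ≤ ‖x k - xstar‖ ^ 2 - (β k * ‖F (y k)‖) ^ 2 := by
      have hstep : ‖x (k+1) - xstar‖ ≤ ‖(x k - xstar) - β k • F (y k)‖ := by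
        rw [hx k]
        calc ‖P (x k - β k • F (y k)) - xstar‖
            = ‖P (x k - β k • F (y k)) - P xstar‖ := by rw [hPfix]
          _ ≤ ‖(x k - β k • F (y k)) - xstar‖ := hP _ _
          _ = ‖(x k - xstar) - β k • F (y k)‖ := by rw [sub_right_comm]
      have hsq : ‖x (k+1) - xstar‖ ^ 2 ≤ ‖(x k - xstar) - β k • F (y k)‖ ^ 2 :=
        pow_le_pow_left₀ (norm_nonneg _) hstep 2
      have hexp : ‖(x k - xstar) - β k • F (y k)‖ ^ 2
          = ‖x k - xstar‖ ^ 2 - 2 * (β k * ⟪x k - xstar, F (y k)⟫_ℝ)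
            + β k ^ 2 * ‖F (y k)‖ ^ 2 := by
        rw [norm_sub_sq_real, real_inner_smul_right, norm_smul, Real.norm_eq_abs,
          mul_pow, sq_abs]
      have hsplit : ⟪F (y k), x k - xstar⟫_ℝ
          = ⟪F (y k), x k - y k⟫_ℝ + ⟪F (y k), y k - xstar⟫_ℝ := by
        rw [← inner_add_right]
        congr 1
        abel
      have hm := hmono (y k) xstar
      rw [hstar, sub_zero] at hm
      have hmon : β k * ‖F (y k)‖ ^ 2 ≤ ⟪x k - xstar, F (y k)⟫_ℝ := by
        rw [real_inner_comm, hsplit]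
        linarith [hβval]
      nlinarith [mul_le_mul_of_nonneg_left hmon hβnn]
    -- lower bound for (β k ‖F (y k)‖)²
    have hlow : c * a ^ 2 ≤ (β k * ‖F (y k)‖) ^ 2 := by
      rcases eq_or_ne a 0 with h0 | h0
      · rw [h0]
        simpa using sq_nonneg (β k * ‖F (y k)‖)
      · have hapos : 0 < |a| := abs_pos.mpr h0
        have hbf : ρ * (1 - ρ) * |a| / A ≤ β k * ‖F (y k)‖ := by
          have hb : β k * ‖F (y k)‖ = ⟪F (y k), x k - y k⟫_ℝ / ‖F (y k)‖ := by
            rw [hβ k]; field_simp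
          rw [hb, div_le_div_iff₀ hApos hFynorm]
          calc ρ * (1 - ρ) * |a| * ‖F (y k)‖
              ≤ ρ * (1 - ρ) * |a| * (A * |a| / li) := by
                apply mul_le_mul_of_nonneg_left hFyk
                have : 0 < 1 - ρ := by linarith
                positivity
            _ = (ρ * (1 - ρ) / li * a ^ 2) * A := by
                field_simp
                linear_combination abs_mul_abs_self a
            _ ≤ ⟪F (y k), x k - y k⟫_ℝ * A :=
                mul_le_mul_of_nonneg_right hinner hApos.le
        have hnn : 0 ≤ ρ * (1 - ρ) * |a| / A := by
          have : 0 < 1 - ρ := by linarith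
          positivity
        have hsq := pow_le_pow_left₀ hnn hbf 2
        have heq : (ρ * (1 - ρ) * |a| / A) ^ 2 = c * a ^ 2 := by
          rw [hc, div_pow, mul_pow, mul_pow, sq_abs]
          ring
        linarith [heq ▸ hsq]
    linarith [hdec, hlow]
  -- telescoping
  have tele : ∀ m : ℕ, ‖x m - xstar‖ ^ 2 + c * ∑ k ∈ Finset.range m, (F (x k) (ik k)) ^ 2
      ≤ ‖x 0 - xstar‖ ^ 2 := by
    intro m
    induction m with
    | zero => simp
    | succ m ih =>
      rw [Finset.sum_range_succ, mul_add]
      linarith [key m]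
  intro K
  obtain ⟨k₀, hk₀mem, hk₀min⟩ := Finset.exists_min_image (Finset.range (K+1))
    (fun k => (F (x k) (ik k)) ^ 2) ⟨0, by simp⟩
  refine ⟨k₀, Nat.lt_succ_iff.mp (Finset.mem_range.mp hk₀mem), ?_⟩
  set t : ℝ := (F (x k₀) (ik k₀)) ^ 2 with ht
  have hsum : ((K:ℝ) + 1) * t ≤ ∑ k ∈ Finset.range (K+1), (F (x k) (ik k)) ^ 2 := by
    calc ((K:ℝ) + 1) * t = ∑ _k ∈ Finset.range (K+1), t := by
          rw [Finset.sum_const, Finset.card_range]; push_cast; ring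
      _ ≤ _ := Finset.sum_le_sum fun k hk => hk₀min k hk
  have hD : ‖x (K+1) - xstar‖ ^ 2 ≥ 0 := sq_nonneg _
  have h1 : c * (((K:ℝ) + 1) * t) ≤ ‖x 0 - xstar‖ ^ 2 := by
    calc c * (((K:ℝ) + 1) * t) ≤ c * ∑ k ∈ Finset.range (K+1), (F (x k) (ik k)) ^ 2 :=
          mul_le_mul_of_nonneg_left hsum hcpos.le
      _ ≤ ‖x 0 - xstar‖ ^ 2 := by linarith [tele (K+1)]
  have hsup : (⨆ j, |F (x k₀) j|) = |F (x k₀) (ik k₀)| :=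
    le_antisymm (ciSup_le (hik k₀)) (le_ciSup (f := fun j => |F (x k₀) j|) (Finite.bddAbove_range _) (ik k₀))
  rw [hsup, sq_abs, ← ht]
  have h1' : ρ ^ 2 * (1 - ρ) ^ 2 * (((K:ℝ) + 1) * t) ≤ A ^ 2 * ‖x 0 - xstar‖ ^ 2 := by
    have h2 := mul_le_mul_of_nonneg_left h1 (le_of_lt (pow_pos hApos 2))
    calc ρ ^ 2 * (1 - ρ) ^ 2 * (((K:ℝ) + 1) * t)
        = A ^ 2 * (c * (((K:ℝ) + 1) * t)) := by
          rw [hc]; field_simp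
      _ ≤ A ^ 2 * ‖x 0 - xstar‖ ^ 2 := h2
  have hden : (0:ℝ) < ρ ^ 2 * (1 - ρ) ^ 2 * ((K:ℝ) + 1) := by
    have : 0 < 1 - ρ := by linarith
    positivity
  rw [div_mul_eq_mul_div, le_div_iff₀ hden]
  calc t * (ρ ^ 2 * (1 - ρ) ^ 2 * ((K:ℝ) + 1))
      = ρ ^ 2 * (1 - ρ) ^ 2 * (((K:ℝ) + 1) * t) := by ring
    _ ≤ A ^ 2 * ‖x 0 - xstar‖ ^ 2 := h1'
end

section
/- Let F : ℝ^n → ℝ^n be monotone, L-Lipschitz continuous, and componentwise Lipschitz continuous with constants l_1, …, l_n > 0. Let x* ∈ ℝ^n satisfy F(x*) = 0 and let P : ℝ^n → ℝ^n be 1-Lipschitz with P(x*) = x*. Fix ρ ∈ (0,1). Let {x_k} be generated by the Greedy Mini-EG method: i_k is an index maximizing |F_i(x_k)| over i ∈ {1,…,n}, y_k = x_k − (ρ/l_{i_k}) F_{i_k}(x_k) e_{i_k}, β_k = ⟨F(y_k), x_k − y_k⟩ / ‖F(y_k)‖², and x_{k+1} = P(x_k − β_k F(y_k)), where F(y_k)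 ≠ 0 for all k. Then liminf_{k→∞} ‖F(x_k)‖_∞ = 0. -/
open scoped InnerProductSpace

/-- Theorem 3.7 (asymptotics): for the Greedy Mini-EG method, the residuals
satisfy `liminf_{k → ∞} ‖F(x_k)‖_∞ = 0`. -/
theorem stmt_9 {n : ℕ} (F : EuclideanSpace ℝ (Fin n) → EuclideanSpace ℝ (Fin n))
    (hmono : ∀ x y : EuclideanSpace ℝ (Fin n), 0 ≤ ⟪F x - F y, x - y⟫_ℝ)
    (L : ℝ) (hL : 0 < L)
    (hLip : ∀ x y : EuclideanSpace ℝ (Fin n), ‖F x - F y‖ ≤ L * ‖x - y‖)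
    (l : Fin n → ℝ) (hl : ∀ i, 0 < l i)
    (hCLip : ∀ (i : Fin n) (x : EuclideanSpace ℝ (Fin n)) (t : ℝ),
      |F (x + EuclideanSpace.single i t) i - F x i| ≤ l i * |t|)
    (xstar : EuclideanSpace ℝ (Fin n)) (hstar : F xstar = 0)
    (P : EuclideanSpace ℝ (Fin n) → EuclideanSpace ℝ (Fin n))
    (hP : ∀ x y : EuclideanSpace ℝ (Fin n), ‖P x - P y‖ ≤ ‖x - y‖)
    (hPfix : P xstar = xstar)
    (ρ : ℝ) (hρ : ρ ∈ Set.Ioo (0 : ℝ) 1)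
    (x y : ℕ → EuclideanSpace ℝ (Fin n)) (ik : ℕ → Fin n) (β : ℕ → ℝ)
    (hik : ∀ (k : ℕ) (j : Fin n), |F (x k) j| ≤ |F (x k) (ik k)|)
    (hy : ∀ k, y k = x k - EuclideanSpace.single (ik k) (ρ / l (ik k) * F (x k) (ik k)))
    (hFy : ∀ k, F (y k) ≠ 0)
    (hβ : ∀ k, β k = ⟪F (y k), x k - y k⟫_ℝ / ‖F (y k)‖ ^ 2)
    (hx : ∀ k, x (k + 1) = P (x k - β k • F (y k))) :
    Filter.liminf (fun k => ⨆ j, |F (x k) j|) Filter.atTop = 0 := by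
  obtain ⟨hρ0, hρ1⟩ := hρ
  rcases Nat.eq_zero_or_pos n with h0 | hn
  · subst h0
    exact absurd (Subsingleton.elim (F (y 0)) 0) (hFy 0)
  haveI : Nonempty (Fin n) := ⟨⟨0, hn⟩⟩
  -- basic quantities
  set r : ℕ → ℝ := fun k => |F (x k) (ik k)| with hr_def
  have hr_sup : ∀ k, (⨆ j, |F (x k) j|) = r k := by
    intro k
    apply le_antisymm
    · exact ciSup_le (hik k)
    · exact le_ciSup (f := fun j => |F (x k) j|) (Finite.bddAbove_range _) (ik k)
  set t : ℕ → ℝ := fun k => ρ / l (ik k) * F (x k) (ik k) with ht_def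
  have hr_nonneg : ∀ k, 0 ≤ r k := fun k => abs_nonneg _
  have hr_pos : ∀ k, 0 < r k := by
    intro k
    rcases (hr_nonneg k).lt_or_eq with h | h
    · exact h
    exfalso
    have hFx0 : F (x k) (ik k) = 0 := by
      have := abs_nonneg (F (x k) (ik k)); simpa [hr_def, ← h] using abs_eq_zero.mp h.symm
    have hs0 : (EuclideanSpace.single (ik k) (0:ℝ)) = 0 := by
      ext j; simp [EuclideanSpace.single_apply]
    have hyx : y k = x k := by
      rw [hy k]; simp [hFx0, hs0]
    apply hFy k
    rw [hyx]
    ext j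
    have h2 := hik k j
    rw [hFx0, abs_zero] at h2
    have h3 : F (x k) j = 0 := abs_eq_zero.mp (le_antisymm h2 (abs_nonneg _))
    simpa using h3
  -- constants
  set lmax : ℝ := Finset.univ.sup' Finset.univ_nonempty l with hlmax_def
  set lmin : ℝ := Finset.univ.inf' Finset.univ_nonempty l with hlmin_def
  have hlmax_pos : 0 < lmax := lt_of_lt_of_le (hl ⟨0, hn⟩) (Finset.le_sup' l (Finset.mem_univ _))
  have hlmin_pos : 0 < lmin := by
    rw [hlmin_def, Finset.lt_inf'_iff]
    exact fun i _ => hl i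
  have hle_lmax : ∀ i, l i ≤ lmax := fun i => Finset.le_sup' l (Finset.mem_univ i)
  have hlmin_le : ∀ i, lmin ≤ l i := fun i => Finset.inf'_le l (Finset.mem_univ i)
  set A : ℝ := ρ * (1 - ρ) / lmax with hA_def
  set C : ℝ := Real.sqrt n + L * ρ / lmin with hC_def
  have hA_pos : 0 < A := div_pos (mul_pos hρ0 (by linarith)) hlmax_pos
  have hC_pos : 0 < C := by
    have h1 : (0:ℝ) ≤ Real.sqrt n := Real.sqrt_nonneg _
    have h2 : 0 < L * ρ / lmin := div_pos (mul_pos hL hρ0) hlmin_pos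
    rw [hC_def]
    linarith
  set c : ℝ := A ^ 2 / C ^ 2 with hc_def
  have hc_pos : 0 < c := div_pos (pow_pos hA_pos 2) (pow_pos hC_pos 2)
  clear_value lmax lmin A C c
  -- facts per step
  have hxy : ∀ k, x k - y k = EuclideanSpace.single (ik k) (t k) := by
    intro k; rw [hy k]; abel
  have ht_abs : ∀ k, |t k| = ρ / l (ik k) * r k := by
    intro k
    rw [ht_def, abs_mul, abs_of_pos (div_pos hρ0 (hl _))]
  have hcomp : ∀ k, |F (y k) (ik k) - F (x k) (ik k)| ≤ ρ * r k := by
    intro k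
    have hsingle : EuclideanSpace.single (ik k) (-t k) = -EuclideanSpace.single (ik k) (t k) := by
      ext j
      simp [EuclideanSpace.single_apply]
      split <;> simp
    have hyk : y k = x k + EuclideanSpace.single (ik k) (-t k) := by
      rw [hy k, hsingle]; abel
    calc |F (y k) (ik k) - F (x k) (ik k)| = |F (x k + EuclideanSpace.single (ik k) (-t k)) (ik k) - F (x k) (ik k)| := by rw [← hyk]
      _ ≤ l (ik k) * |(-t k)| := hCLip (ik k) (x k) (-t k)
      _ = l (ik k) * (ρ / l (ik k) * r k) := by rw [abs_neg, ht_abs k]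
      _ = ρ * r k := by
            have hne := (hl (ik k)).ne'
            field_simp
  set g : ℕ → ℝ := fun k => ⟪F (y k), x k - y k⟫_ℝ with hg_def
  have hg_eq : ∀ k, g k = t k * F (y k) (ik k) := by
    intro k
    rw [hg_def]
    simp only [hxy k]
    rw [EuclideanSpace.inner_single_right]
    simp [mul_comm]
  have hg_lb : ∀ k, A * r k ^ 2 ≤ g k := by
    intro k
    have h1 : t k * F (x k) (ik k) = ρ / l (ik k) * r k ^ 2 := by
      rw [ht_def, hr_def]; rw [sq_abs]; ring
    have h2 : t k * (F (y k) (ik k) - F (x k) (ik k)) ≥ -(ρ / l (ik k) * r k * (ρ * r k)) := by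
      have := abs_mul (t k) (F (y k) (ik k) - F (x k) (ik k)) ▸ neg_abs_le (t k * (F (y k) (ik k) - F (x k) (ik k)))
      have hb : |t k * (F (y k) (ik k) - F (x k) (ik k))| ≤ ρ / l (ik k) * r k * (ρ * r k) := by
        rw [abs_mul, ht_abs k]
        exact mul_le_mul_of_nonneg_left (hcomp k)
          (mul_nonneg (le_of_lt (div_pos hρ0 (hl _))) (hr_nonneg k))
      linarith [neg_abs_le (t k * (F (y k) (ik k) - F (x k) (ik k)))]
    have h3 : g k ≥ ρ / l (ik k) * r k ^ 2 - ρ / l (ik k) * r k * (ρ * r k) := by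
      have : g k = t k * F (x k) (ik k) + t k * (F (y k) (ik k) - F (x k) (ik k)) := by
        rw [hg_eq k]; ring
      rw [this, h1]; linarith
    have h4 : ρ / l (ik k) * r k ^ 2 - ρ / l (ik k) * r k * (ρ * r k)
        = ρ * (1 - ρ) / l (ik k) * r k ^ 2 := by ring
    have h5 : A * r k ^ 2 ≤ ρ * (1 - ρ) / l (ik k) * r k ^ 2 := by
      apply mul_le_mul_of_nonneg_right _ (sq_nonneg _)
      rw [hA_def]
      apply div_le_div_of_nonneg_left (le_of_lt (mul_pos hρ0 (by linarith))) (hl _) (hle_lmax _)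
    linarith
  have hg_pos : ∀ k, 0 < g k := fun k =>
    lt_of_lt_of_le (mul_pos hA_pos (pow_pos (hr_pos k) 2)) (hg_lb k)
  have hFy_pos : ∀ k, 0 < ‖F (y k)‖ := fun k => norm_pos_iff.mpr (hFy k)
  have hFy_ub : ∀ k, ‖F (y k)‖ ≤ C * r k := by
    intro k
    have hFx : ‖F (x k)‖ ≤ Real.sqrt n * r k := by
      have h1 : ‖F (x k)‖ = Real.sqrt (∑ j, ‖F (x k) j‖ ^ 2) := EuclideanSpace.norm_eq _
      rw [h1]
      have h2 : (∑ j, ‖F (x k) j‖ ^ 2) ≤ ∑ _j : Fin n, r k ^ 2 := by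
        apply Finset.sum_le_sum
        intro j _
        have : ‖F (x k) j‖ ≤ r k := by rw [Real.norm_eq_abs]; exact hik k j
        exact pow_le_pow_left₀ (norm_nonneg _) this 2
      calc Real.sqrt (∑ j, ‖F (x k) j‖ ^ 2) ≤ Real.sqrt (∑ _j : Fin n, r k ^ 2) :=
            Real.sqrt_le_sqrt h2
        _ = Real.sqrt (n * r k ^ 2) := by rw [Finset.sum_const, Finset.card_univ,
              Fintype.card_fin, nsmul_eq_mul]
        _ = Real.sqrt n * r k := by
            rw [Real.sqrt_mul (Nat.cast_nonneg n), Real.sqrt_sq (hr_nonneg k)]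
    have hdiff : ‖F (y k) - F (x k)‖ ≤ L * ρ / lmin * r k := by
      calc ‖F (y k) - F (x k)‖ ≤ L * ‖y k - x k‖ := hLip _ _
        _ = L * |t k| := by
            rw [← norm_neg, neg_sub, hxy k, EuclideanSpace.norm_single, Real.norm_eq_abs]
        _ ≤ L * ρ / lmin * r k := by
            rw [ht_abs k]
            have h1 : ρ / l (ik k) ≤ ρ / lmin :=
              div_le_div_of_nonneg_left (le_of_lt hρ0) hlmin_pos (hlmin_le _)
            have h2 : ρ / l (ik k) * r k ≤ ρ / lmin * r k :=
              mul_le_mul_of_nonneg_right h1 (hr_nonneg k)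
            calc L * (ρ / l (ik k) * r k) ≤ L * (ρ / lmin * r k) :=
                  mul_le_mul_of_nonneg_left h2 (le_of_lt hL)
              _ = L * ρ / lmin * r k := by ring
    calc ‖F (y k)‖ = ‖F (x k) + (F (y k) - F (x k))‖ := by congr 1; abel
      _ ≤ ‖F (x k)‖ + ‖F (y k) - F (x k)‖ := norm_add_le _ _
      _ ≤ Real.sqrt n * r k + L * ρ / lmin * r k := add_le_add hFx hdiff
      _ = C * r k := by rw [hC_def]; ring
  -- main descent inequality
  set a : ℕ → ℝ := fun k => ‖x k - xstar‖ ^ 2 with ha_def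
  have key : ∀ k, a (k + 1) + c * r k ^ 2 ≤ a k := by
    intro k
    have hβ_val : β k = g k / ‖F (y k)‖ ^ 2 := hβ k
    have hβ_nonneg : 0 ≤ β k := by
      rw [hβ_val]; exact le_of_lt (div_pos (hg_pos k) (pow_pos (hFy_pos k) 2))
    -- step 1: nonexpansive projection
    have h1 : a (k + 1) ≤ ‖(x k - xstar) - β k • F (y k)‖ ^ 2 := by
      have := hP (x k - β k • F (y k)) xstar
      rw [hPfix] at this
      have heq : x k - β k • F (y k) - xstar = (x k - xstar) - β k • F (y k) := by abel
      rw [heq] at this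
      simp only [ha_def]
      rw [hx k]
      exact pow_le_pow_left₀ (norm_nonneg _) this 2
    -- step 2: expand the square
    have h2 : ‖(x k - xstar) - β k • F (y k)‖ ^ 2
        = a k - 2 * (β k * ⟪F (y k), x k - xstar⟫_ℝ) + β k ^ 2 * ‖F (y k)‖ ^ 2 := by
      rw [norm_sub_sq_real, real_inner_smul_right, real_inner_comm, norm_smul,
        mul_pow, Real.norm_eq_abs, sq_abs]
    -- step 3: monotonicity
    have h3 : g k ≤ ⟪F (y k), x k - xstar⟫_ℝ := by
      have hm := hmono (y k) xstar
      rw [hstar, sub_zero] at hm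
      have : ⟪F (y k), x k - xstar⟫_ℝ = g k + ⟪F (y k), y k - xstar⟫_ℝ := by
        rw [hg_def, ← inner_add_right]
        congr 1
        abel
      rw [this]
      linarith
    have h4 : a (k + 1) ≤ a k - g k ^ 2 / ‖F (y k)‖ ^ 2 := by
      have hne : (‖F (y k)‖ : ℝ) ^ 2 ≠ 0 := ne_of_gt (pow_pos (hFy_pos k) 2)
      have hββ : β k ^ 2 * ‖F (y k)‖ ^ 2 = g k ^ 2 / ‖F (y k)‖ ^ 2 := by
        rw [hβ_val]; field_simp
      have hβg : β k * g k = g k ^ 2 / ‖F (y k)‖ ^ 2 := by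
        rw [hβ_val]; field_simp
      have hmid : β k * g k ≤ β k * ⟪F (y k), x k - xstar⟫_ℝ :=
        mul_le_mul_of_nonneg_left h3 hβ_nonneg
      calc a (k + 1) ≤ a k - 2 * (β k * ⟪F (y k), x k - xstar⟫_ℝ) + β k ^ 2 * ‖F (y k)‖ ^ 2 := by
            rw [← h2]; exact h1
        _ ≤ a k - 2 * (β k * g k) + β k ^ 2 * ‖F (y k)‖ ^ 2 := by linarith
        _ = a k - g k ^ 2 / ‖F (y k)‖ ^ 2 := by rw [hββ, hβg]; ring
    -- step 4: lower bound the decrement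
    have h5 : c * r k ^ 2 ≤ g k ^ 2 / ‖F (y k)‖ ^ 2 := by
      have hCr : ‖F (y k)‖ ^ 2 ≤ C ^ 2 * r k ^ 2 := by
        rw [← mul_pow]
        exact pow_le_pow_left₀ (norm_nonneg _) (hFy_ub k) 2
      have hAg : (A * r k ^ 2) ^ 2 ≤ g k ^ 2 :=
        pow_le_pow_left₀ (le_of_lt (mul_pos hA_pos (pow_pos (hr_pos k) 2))) (hg_lb k) 2
      have hdd : (A * r k ^ 2) ^ 2 / (C ^ 2 * r k ^ 2) ≤ g k ^ 2 / ‖F (y k)‖ ^ 2 :=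
        div_le_div₀ (sq_nonneg _) hAg (pow_pos (hFy_pos k) 2) hCr
      have heq : (A * r k ^ 2) ^ 2 / (C ^ 2 * r k ^ 2) = c * r k ^ 2 := by
        have hrne : r k ≠ 0 := (hr_pos k).ne'
        have hCne : C ≠ 0 := hC_pos.ne'
        rw [hc_def]
        field_simp
      rw [← heq]
      exact hdd
    linarith
  -- telescoping sum
  have ha_nonneg : ∀ k, 0 ≤ a k := fun k => sq_nonneg _
  have hsum : ∀ N, (∑ k ∈ Finset.range N, c * r k ^ 2) ≤ a 0 := by
    intro N
    have h : ∀ N, (∑ k ∈ Finset.range N, c * r k ^ 2) + a N ≤ a 0 := by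
      intro N
      induction N with
      | zero => simp
      | succ m ih =>
        rw [Finset.sum_range_succ]
        have := key m
        linarith
    have := h N
    linarith [ha_nonneg N]
  have hsummable : Summable (fun k => c * r k ^ 2) :=
    summable_of_sum_range_le (fun k => mul_nonneg (le_of_lt hc_pos) (sq_nonneg _)) hsum
  have htend0 : Filter.Tendsto (fun k => c * r k ^ 2) Filter.atTop (nhds 0) :=
    hsummable.tendsto_atTop_zero
  have htend1 : Filter.Tendsto (fun k => r k ^ 2) Filter.atTop (nhds 0) := by
    have := htend0.div_const c
    simpa [mul_div_assoc, mul_div_cancel_left₀ _ (ne_of_gt hc_pos)] using this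
  have htend2 : Filter.Tendsto r Filter.atTop (nhds 0) := by
    have hsqrt : Filter.Tendsto (fun k => Real.sqrt (r k ^ 2)) Filter.atTop (nhds (Real.sqrt 0)) :=
      (Real.continuous_sqrt.tendsto 0).comp htend1
    rw [Real.sqrt_zero] at hsqrt
    convert hsqrt using 2 with k
    rw [Real.sqrt_sq (hr_nonneg k)]
  have hfun : (fun k => ⨆ j, |F (x k) j|) = r := funext hr_sup
  rw [hfun]
  exact htend2.liminf_eq
end

section
/- Let F : ℝ^n → ℝ^n be monotone, L-Lipschitz continuous, and componentwise Lipschitz continuous with constants l_1, …, l_n > 0, and set l_max = max_{1≤i≤n} l_i. Let x* ∈ ℝ^n satisfy F(x*) = 0 and let P : ℝ^n → ℝ^n be 1-Lipschitz with P(x*) = x*. Fix ρ ∈ (0,1), an arbitrary index i ∈ {1,…,n}, and x ∈ ℝ^n; define y = x − (ρ/l_i) F_i(x) e_i, assume F(y) ≠ 0, set β = ⟨F(y), x − y⟩ / ‖F(y)‖², and x⁺ = P(x − β F(y)). Then ‖x − x*‖² − ‖x⁺ − x*‖² ≥ ρ²(1−ρ)² |F_i(x)|⁴ / ( (l_max +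 ρL)² ‖F(x)‖² ). -/
open scoped InnerProductSpace

set_option maxHeartbeats 800000

private lemma aux_ratio (ρ li lm L a N : ℝ) (hli : li ≠ 0) :
    ρ ^ 2 * (1 - ρ) ^ 2 * a ^ 4 / ((lm + ρ * L) ^ 2 * N ^ 2) =
      (ρ * (1 - ρ) / li * a ^ 2) ^ 2 / ((lm + ρ * L) / li * N) ^ 2 := by
  rcases eq_or_ne (lm + ρ * L) 0 with h | h
  · simp [h]
  rcases eq_or_ne N 0 with hN | hN
  · simp [hN]
  field_simp

/-- Per-step estimate (3.18) used in Lemma 3.9: for an arbitrary coordinate `i`,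
the mini-extragradient step followed by the adaptive update satisfies
`‖x - x*‖² - ‖x⁺ - x*‖² ≥ ρ²(1-ρ)²|Fᵢ(x)|⁴ / ((l_max + ρL)² ‖F(x)‖²)`. -/
theorem stmt_10 {n : ℕ} (F : EuclideanSpace ℝ (Fin n) → EuclideanSpace ℝ (Fin n))
    (hmono : ∀ x y : EuclideanSpace ℝ (Fin n), 0 ≤ ⟪F x - F y, x - y⟫_ℝ)
    (L : ℝ) (hL : 0 < L)
    (hLip : ∀ x y : EuclideanSpace ℝ (Fin n), ‖F x - F y‖ ≤ L * ‖x - y‖)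
    (l : Fin n → ℝ) (hl : ∀ i, 0 < l i)
    (hCLip : ∀ (i : Fin n) (x : EuclideanSpace ℝ (Fin n)) (t : ℝ),
      |F (x + EuclideanSpace.single i t) i - F x i| ≤ l i * |t|)
    (lmax : ℝ) (hlmax : IsGreatest (Set.range l) lmax)
    (xstar : EuclideanSpace ℝ (Fin n)) (hstar : F xstar = 0)
    (P : EuclideanSpace ℝ (Fin n) → EuclideanSpace ℝ (Fin n))
    (hP : ∀ x y : EuclideanSpace ℝ (Fin n), ‖P x - P y‖ ≤ ‖x - y‖)
    (hPfix : P xstar = xstar)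
    (ρ : ℝ) (hρ : ρ ∈ Set.Ioo (0 : ℝ) 1)
    (i : Fin n) (x y : EuclideanSpace ℝ (Fin n))
    (hy : y = x - EuclideanSpace.single i (ρ / l i * F x i))
    (hFy : F y ≠ 0)
    (β : ℝ) (hβ : β = ⟪F y, x - y⟫_ℝ / ‖F y‖ ^ 2)
    (xplus : EuclideanSpace ℝ (Fin n)) (hxplus : xplus = P (x - β • F y)) :
    ρ ^ 2 * (1 - ρ) ^ 2 * |F x i| ^ 4 / ((lmax + ρ * L) ^ 2 * ‖F x‖ ^ 2) ≤
      ‖x - xstar‖ ^ 2 - ‖xplus - xstar‖ ^ 2 := by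
  obtain ⟨hρ0, hρ1⟩ := hρ
  have hli : 0 < l i := hl i
  have hFyn : (0 : ℝ) < ‖F y‖ := norm_pos_iff.mpr hFy
  have hFyn2 : (0 : ℝ) < ‖F y‖ ^ 2 := by positivity
  set t : ℝ := ρ / l i * F x i with ht
  -- x - y = single i t
  have hxy : x - y = EuclideanSpace.single i t := by rw [hy]; abel
  -- componentwise Lipschitz estimate
  have hneg : EuclideanSpace.single i (-t) = -(EuclideanSpace.single i t : EuclideanSpace ℝ (Fin n)) := by
    ext j
    simp [EuclideanSpace.single_apply]
    split <;> simp
  have hyeq : y = x + EuclideanSpace.single i (-t) := by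
    rw [hneg, hy]; abel
  have hcomp : |F y i - F x i| ≤ ρ * |F x i| := by
    have := hCLip i x (-t)
    rw [← hyeq] at this
    calc |F y i - F x i| ≤ l i * |(-t)| := this
      _ = ρ * |F x i| := by
          rw [abs_neg, ht, abs_mul, abs_of_pos (div_pos hρ0 hli)]
          field_simp
  -- A := ⟪F y, x - y⟫
  set A : ℝ := ⟪F y, x - y⟫_ℝ with hA
  have hAval : A = t * F y i := by
    rw [hA, hxy, EuclideanSpace.inner_single_right]; simp [mul_comm]
  have hc : ρ * (1 - ρ) / l i * (F x i) ^ 2 ≤ A := by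
    have h1 : (1 - ρ) * (F x i) ^ 2 ≤ F x i * F y i := by
      have : F x i * F y i = (F x i) ^ 2 + (F y i - F x i) * F x i := by ring
      rw [this]
      have habs : -(ρ * |F x i| * |F x i|) ≤ (F y i - F x i) * F x i := by
        have h2 : |(F y i - F x i) * F x i| ≤ ρ * |F x i| * |F x i| := by
          rw [abs_mul]
          exact mul_le_mul_of_nonneg_right hcomp (abs_nonneg _)
        linarith [neg_abs_le ((F y i - F x i) * F x i)]
      nlinarith [sq_abs (F x i)]
    rw [hAval, ht]
    have : ρ / l i * F x i * F y i = ρ / l i * (F x i * F y i) := by ring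
    rw [this]
    have h3 : ρ / l i * ((1 - ρ) * (F x i) ^ 2) ≤ ρ / l i * (F x i * F y i) :=
      mul_le_mul_of_nonneg_left h1 (le_of_lt (div_pos hρ0 hli))
    calc ρ * (1 - ρ) / l i * (F x i) ^ 2 = ρ / l i * ((1 - ρ) * (F x i) ^ 2) := by ring
      _ ≤ _ := h3
  have hA0 : 0 ≤ A := by
    refine le_trans ?_ hc
    apply mul_nonneg (div_nonneg ?_ hli.le) (sq_nonneg _)
    nlinarith
  have hβ0 : 0 ≤ β := by rw [hβ]; positivity
  -- monotonicity: ⟪F y, x - xstar⟫ ≥ A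
  have hst : A ≤ ⟪F y, x - xstar⟫_ℝ := by
    have h := hmono y xstar
    rw [hstar, sub_zero] at h
    have : ⟪F y, x - xstar⟫_ℝ = A + ⟪F y, y - xstar⟫_ℝ := by
      rw [hA, ← inner_add_right]
      congr 1
      abel
    rw [this]
    linarith
  -- main descent inequality
  have hdesc : A ^ 2 / ‖F y‖ ^ 2 ≤ ‖x - xstar‖ ^ 2 - ‖xplus - xstar‖ ^ 2 := by
    have h1 : ‖xplus - xstar‖ ≤ ‖x - β • F y - xstar‖ := by
      have h := hP (x - β • F y) xstar
      rw [hPfix] at h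
      rw [hxplus]; exact h
    have h2 : ‖x - β • F y - xstar‖ ^ 2 =
        ‖x - xstar‖ ^ 2 - 2 * (β * ⟪F y, x - xstar⟫_ℝ) + β ^ 2 * ‖F y‖ ^ 2 := by
      have e : x - β • F y - xstar = (x - xstar) - β • F y := by abel
      rw [e, norm_sub_sq_real, real_inner_smul_right, norm_smul, real_inner_comm,
        mul_pow, Real.norm_eq_abs, sq_abs]
    have hβA : β * ‖F y‖ ^ 2 = A := by
      rw [hβ]; field_simp
    have h3 : ‖xplus - xstar‖ ^ 2 ≤ ‖x - β • F y - xstar‖ ^ 2 := by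
      have := h1
      nlinarith [norm_nonneg (xplus - xstar), norm_nonneg (x - β • F y - xstar)]
    have h4 : 2 * (β * A) - β ^ 2 * ‖F y‖ ^ 2 = A ^ 2 / ‖F y‖ ^ 2 := by
      rw [hβ]; field_simp; ring
    linarith [mul_le_mul_of_nonneg_left hst hβ0, h2, h3, h4]
  -- bound on ‖F y‖
  have hlile : l i ≤ lmax := hlmax.2 ⟨i, rfl⟩
  have hcoord : |F x i| ≤ ‖F x‖ := by
    have h := abs_real_inner_le_norm (EuclideanSpace.single i (1 : ℝ)) (F x)
    rw [EuclideanSpace.inner_single_left] at h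
    simpa using h
  have hFyb : ‖F y‖ ≤ (lmax + ρ * L) / l i * ‖F x‖ := by
    have h1 : ‖F y‖ ≤ ‖F x‖ + L * ‖y - x‖ := by
      calc ‖F y‖ = ‖F x + (F y - F x)‖ := by congr 1; abel
        _ ≤ ‖F x‖ + ‖F y - F x‖ := norm_add_le _ _
        _ ≤ ‖F x‖ + L * ‖y - x‖ := by linarith [hLip y x]
    have h2 : ‖y - x‖ = ρ / l i * |F x i| := by
      have : y - x = -(x - y) := by abel
      rw [this, norm_neg, hxy, EuclideanSpace.norm_single, ht, Real.norm_eq_abs,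
        abs_mul, abs_of_pos (div_pos hρ0 hli)]
    have h3 : L * ‖y - x‖ ≤ L * (ρ / l i) * ‖F x‖ := by
      rw [h2]
      have := mul_le_mul_of_nonneg_left hcoord (le_of_lt (div_pos hρ0 hli))
      nlinarith
    have h4 : ‖F x‖ + L * (ρ / l i) * ‖F x‖ = (l i + ρ * L) / l i * ‖F x‖ := by
      field_simp
    have h5 : (l i + ρ * L) / l i * ‖F x‖ ≤ (lmax + ρ * L) / l i * ‖F x‖ := by
      apply mul_le_mul_of_nonneg_right _ (norm_nonneg _)
      gcongr
    linarith
  -- finish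
  by_cases hFx : F x = 0
  · have h0 : F x i = 0 := by rw [hFx]; rfl
    have hz : ρ ^ 2 * (1 - ρ) ^ 2 * |F x i| ^ 4 / ((lmax + ρ * L) ^ 2 * ‖F x‖ ^ 2)
        = 0 := by rw [h0]; simp
    rw [hz]
    exact le_trans (by positivity) hdesc
  · have hFxn : (0 : ℝ) < ‖F x‖ := norm_pos_iff.mpr hFx
    have hden : (0 : ℝ) < (lmax + ρ * L) := by
      have := mul_pos hρ0 hL; linarith
    refine le_trans ?_ hdesc
    have hc2 : (ρ * (1 - ρ) / l i * (F x i) ^ 2) ^ 2 ≤ A ^ 2 := by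
      have h0 : 0 ≤ ρ * (1 - ρ) / l i * (F x i) ^ 2 :=
        mul_nonneg (div_nonneg (by nlinarith) hli.le) (sq_nonneg _)
      nlinarith
    have hD : ‖F y‖ ^ 2 ≤ ((lmax + ρ * L) / l i * ‖F x‖) ^ 2 := by
      nlinarith [norm_nonneg (F y)]
    have key : (ρ * (1 - ρ) / l i * (F x i) ^ 2) ^ 2 /
        (((lmax + ρ * L) / l i * ‖F x‖) ^ 2) ≤ A ^ 2 / ‖F y‖ ^ 2 :=
      div_le_div₀ (sq_nonneg A) hc2 hFyn2 hD
    refine le_trans (le_of_eq ?_) key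
    have habs4 : |F x i| ^ 4 = F x i ^ 4 := by
      rw [pow_abs, abs_of_nonneg (by positivity)]
    rw [habs4]
    exact aux_ratio ρ (l i) lmax L (F x i) ‖F x‖ hli.ne'
end

section
/- Let F : ℝ^n → ℝ^n be monotone, L-Lipschitz continuous, and componentwise Lipschitz continuous with constants l_1, …, l_n > 0, and set l_max = max_{1≤i≤n} l_i. Let x* ∈ ℝ^n satisfy F(x*) = 0, let P : ℝ^n → ℝ^n be 1-Lipschitz with P(x*) = x*, and fix ρ ∈ (0,1) and γ ≥ 0. Let x ∈ ℝ^n, and for each i ∈ {1,…,n} define y(i) = x − (ρ/l_i) F_i(x) e_i, assume F(y(i)) ≠ 0, set β(i) = ⟨F(y(i)), x − y(i)⟩ / ‖F(y(i))‖², and x⁺(i) = P(x − β(i) F(y(i))). Then the expectation under the distribution p_γ(i) = l_i^γ / Σ_{j=1}^n l_j^γ satisfies: ‖x − x*‖² − Σ_{i=1}^n p_γ(i) ‖x⁺(i) − x*‖² ≥ ρ²(1−ρ)² ‖F²(x)‖_[γ]² / ( (Σ_{i=1}^n l_i^γ) (l_max + ρL)² ‖F(x)‖² ), where F²(x) = (F_1(x)²,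 …, F_n(x)²) and ‖z‖_[γ] = sqrt( Σ_{i=1}^n l_i^γ z_i² ). -/
open scoped InnerProductSpace

set_option maxHeartbeats 1000000 in
/-- Lemma 3.9: the expected per-step decrease of the Random Mini-EG method under
the sampling distribution `p_γ(i) = l_i^γ / Σ_j l_j^γ`:
`‖x - x*‖² - E_i ‖x⁺(i) - x*‖² ≥ ρ²(1-ρ)² ‖F²(x)‖_[γ]² / ((Σ_i l_i^γ)(l_max + ρL)² ‖F(x)‖²)`,
where `‖z‖_[γ]² = Σ_i l_i^γ z_i²` and `F²(x)_i = F_i(x)²`. -/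
theorem stmt_11 {n : ℕ} (F : EuclideanSpace ℝ (Fin n) → EuclideanSpace ℝ (Fin n))
    (hmono : ∀ x y : EuclideanSpace ℝ (Fin n), 0 ≤ ⟪F x - F y, x - y⟫_ℝ)
    (L : ℝ) (hL : 0 < L)
    (hLip : ∀ x y : EuclideanSpace ℝ (Fin n), ‖F x - F y‖ ≤ L * ‖x - y‖)
    (l : Fin n → ℝ) (hl : ∀ i, 0 < l i)
    (hCLip : ∀ (i : Fin n) (x : EuclideanSpace ℝ (Fin n)) (t : ℝ),
      |F (x + EuclideanSpace.single i t) i - F x i| ≤ l i * |t|)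
    (lmax : ℝ) (hlmax : IsGreatest (Set.range l) lmax)
    (xstar : EuclideanSpace ℝ (Fin n)) (hstar : F xstar = 0)
    (P : EuclideanSpace ℝ (Fin n) → EuclideanSpace ℝ (Fin n))
    (hP : ∀ x y : EuclideanSpace ℝ (Fin n), ‖P x - P y‖ ≤ ‖x - y‖)
    (hPfix : P xstar = xstar)
    (ρ : ℝ) (hρ : ρ ∈ Set.Ioo (0 : ℝ) 1) (γ : ℝ) (hγ : 0 ≤ γ)
    (x : EuclideanSpace ℝ (Fin n))
    (y : Fin n → EuclideanSpace ℝ (Fin n))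
    (hy : ∀ i, y i = x - EuclideanSpace.single i (ρ / l i * F x i))
    (hFy : ∀ i, F (y i) ≠ 0)
    (β : Fin n → ℝ)
    (hβ : ∀ i, β i = ⟪F (y i), x - y i⟫_ℝ / ‖F (y i)‖ ^ 2)
    (xplus : Fin n → EuclideanSpace ℝ (Fin n))
    (hxplus : ∀ i, xplus i = P (x - β i • F (y i))) :
    ρ ^ 2 * (1 - ρ) ^ 2 * (∑ i, l i ^ γ * ((F x i) ^ 2) ^ 2) /
        ((∑ i, l i ^ γ) * (lmax + ρ * L) ^ 2 * ‖F x‖ ^ 2) ≤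
      ‖x - xstar‖ ^ 2 -
        ∑ i, (l i ^ γ / ∑ j, l j ^ γ) * ‖xplus i - xstar‖ ^ 2 := by
  obtain ⟨hρ0, hρ1⟩ := hρ
  obtain ⟨⟨i0, hi0⟩, hub⟩ := hlmax
  have hub' : ∀ i, l i ≤ lmax := fun i => hub ⟨i, rfl⟩
  have hlmax_pos : 0 < lmax := hi0 ▸ hl i0
  set T : ℝ := ∑ j, l j ^ γ with hTdef
  have hTpos : 0 < T :=
    Finset.sum_pos (fun j _ => Real.rpow_pos_of_pos (hl j) γ) ⟨i0, Finset.mem_univ i0⟩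
  have hpnn : ∀ i, (0:ℝ) ≤ l i ^ γ / T :=
    fun i => div_nonneg (Real.rpow_pos_of_pos (hl i) γ).le hTpos.le
  have hpsum : ∑ i, l i ^ γ / T = 1 := by rw [← Finset.sum_div, ← hTdef, div_self hTpos.ne']
  have hxy : ∀ i, x - y i = EuclideanSpace.single i (ρ / l i * F x i) := fun i => by
    rw [hy i, sub_sub_cancel]
  have hnormxy : ∀ i, ‖x - y i‖ = ρ / l i * |F x i| := by
    intro i
    rw [hxy i, EuclideanSpace.norm_single, Real.norm_eq_abs, abs_mul,
      abs_of_pos (div_pos hρ0 (hl i))]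
  have hcomp : ∀ i, |F (y i) i - F x i| ≤ ρ * |F x i| := by
    intro i
    have hyx : y i + EuclideanSpace.single i (ρ / l i * F x i) = x := by
      rw [hy i, sub_add_cancel]
    have h := hCLip i (y i) (ρ / l i * F x i)
    rw [hyx] at h
    rw [abs_sub_comm]
    calc |F x i - F (y i) i| ≤ l i * |ρ / l i * F x i| := h
      _ = ρ * |F x i| := by
          rw [abs_mul, abs_of_pos (div_pos hρ0 (hl i))]
          field_simp
          exact mul_div_cancel_left₀ _ (hl i).ne'
  have hinner : ∀ i, ⟪F (y i), x - y i⟫_ℝ = F (y i) i * (ρ / l i * F x i) := by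
    intro i
    rw [hxy i, EuclideanSpace.inner_single_right]
    simp [mul_comm]
  have hc_lb : ∀ i, ρ / l i * ((1 - ρ) * F x i ^ 2) ≤ ⟪F (y i), x - y i⟫_ℝ := by
    intro i
    rw [hinner i]
    have h := hcomp i
    have h2 : (F x i)^2 - ρ * (F x i)^2 ≤ F (y i) i * F x i := by
      nlinarith [neg_abs_le ((F (y i) i - F x i) * F x i), abs_mul (F (y i) i - F x i) (F x i),
        mul_le_mul_of_nonneg_right h (abs_nonneg (F x i)), sq_abs (F x i)]
    have hρl : (0:ℝ) ≤ ρ / l i := (div_pos hρ0 (hl i)).le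
    nlinarith [mul_le_mul_of_nonneg_left h2 hρl]
  have hc_nn : ∀ i, 0 ≤ ⟪F (y i), x - y i⟫_ℝ := by
    intro i
    refine le_trans ?_ (hc_lb i)
    have h1ρ : (0:ℝ) ≤ 1 - ρ := by linarith
    exact mul_nonneg (div_pos hρ0 (hl i)).le (mul_nonneg h1ρ (sq_nonneg _))
  have habs : ∀ i, |F x i| ≤ ‖F x‖ := by
    intro i
    have h := abs_real_inner_le_norm (F x) (EuclideanSpace.single i (1:ℝ))
    rw [EuclideanSpace.inner_single_right, EuclideanSpace.norm_single] at h
    simpa using h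
  have hFy_ub : ∀ i, ‖F (y i)‖ ≤ (lmax + ρ * L) / l i * ‖F x‖ := by
    intro i
    have h1 : ‖F (y i) - F x‖ ≤ L * ‖y i - x‖ := hLip _ _
    have h2 : ‖y i - x‖ = ρ / l i * |F x i| := by rw [norm_sub_rev, hnormxy i]
    calc ‖F (y i)‖ = ‖F x + (F (y i) - F x)‖ := by congr 1; abel
      _ ≤ ‖F x‖ + ‖F (y i) - F x‖ := norm_add_le _ _
      _ ≤ ‖F x‖ + L * (ρ / l i * |F x i|) := by rw [h2] at h1; linarith
      _ ≤ ‖F x‖ + L * (ρ / l i * ‖F x‖) := by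
          have hρl : (0:ℝ) ≤ ρ / l i := (div_pos hρ0 (hl i)).le
          have := mul_le_mul_of_nonneg_left
            (mul_le_mul_of_nonneg_left (habs i) hρl) hL.le
          linarith
      _ ≤ (lmax + ρ * L) / l i * ‖F x‖ := by
          rw [show (lmax + ρ * L) / l i * ‖F x‖ = (lmax + ρ * L) * ‖F x‖ / l i by ring,
            le_div_iff₀ (hl i)]
          have h3 := mul_le_mul_of_nonneg_right (hub' i) (norm_nonneg (F x))
          have h4 : ρ / l i * ‖F x‖ * l i = ρ * ‖F x‖ := by
            rw [mul_right_comm, div_mul_cancel₀ ρ (hl i).ne']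
          nlinarith [norm_nonneg (F x)]
  have key : ∀ i, ‖xplus i - xstar‖ ^ 2
      ≤ ‖x - xstar‖ ^ 2 - ⟪F (y i), x - y i⟫_ℝ ^ 2 / ‖F (y i)‖ ^ 2 := by
    intro i
    have hN : (0:ℝ) < ‖F (y i)‖ ^ 2 := by
      have := norm_pos_iff.mpr (hFy i); positivity
    have hstep : ‖xplus i - xstar‖ ≤ ‖x - xstar - β i • F (y i)‖ := by
      rw [hxplus i]
      calc ‖P (x - β i • F (y i)) - xstar‖ = ‖P (x - β i • F (y i)) - P xstar‖ := by rw [hPfix]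
        _ ≤ ‖x - β i • F (y i) - xstar‖ := hP _ _
        _ = ‖x - xstar - β i • F (y i)‖ := by rw [sub_right_comm]
    have hsq : ‖xplus i - xstar‖ ^ 2 ≤ ‖x - xstar - β i • F (y i)‖ ^ 2 :=
      pow_le_pow_left₀ (norm_nonneg _) hstep 2
    have hexp : ‖x - xstar - β i • F (y i)‖ ^ 2
        = ‖x - xstar‖ ^ 2 - 2 * (β i * ⟪F (y i), x - xstar⟫_ℝ) + β i ^ 2 * ‖F (y i)‖ ^ 2 := by
      rw [norm_sub_sq_real, real_inner_smul_right, norm_smul, Real.norm_eq_abs, mul_pow, sq_abs,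
        real_inner_comm]
    have hmon2 : ⟪F (y i), x - y i⟫_ℝ ≤ ⟪F (y i), x - xstar⟫_ℝ := by
      have h0 := hmono (y i) xstar
      rw [hstar, sub_zero] at h0
      have hsplit : ⟪F (y i), x - xstar⟫_ℝ
          = ⟪F (y i), x - y i⟫_ℝ + ⟪F (y i), y i - xstar⟫_ℝ := by
        rw [← inner_add_right]
        congr 1
        abel
      linarith
    set c := ⟪F (y i), x - y i⟫_ℝ with hcdef
    have hcnn : 0 ≤ c := hc_nn i
    have hβval : β i = c / ‖F (y i)‖ ^ 2 := hβ i
    have e1 : (c / ‖F (y i)‖ ^ 2) ^ 2 * ‖F (y i)‖ ^ 2 = c ^ 2 / ‖F (y i)‖ ^ 2 := by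
      field_simp
    have e2 : c / ‖F (y i)‖ ^ 2 * c = c ^ 2 / ‖F (y i)‖ ^ 2 := by
      field_simp
    have h5 : c ^ 2 / ‖F (y i)‖ ^ 2 ≤ β i * ⟪F (y i), x - xstar⟫_ℝ := by
      rw [hβval, ← e2]
      exact mul_le_mul_of_nonneg_left hmon2 (div_nonneg hcnn hN.le)
    have h6 : β i ^ 2 * ‖F (y i)‖ ^ 2 = c ^ 2 / ‖F (y i)‖ ^ 2 := by rw [hβval, e1]
    calc ‖xplus i - xstar‖ ^ 2 ≤ ‖x - xstar - β i • F (y i)‖ ^ 2 := hsq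
      _ = ‖x - xstar‖ ^ 2 - 2 * (β i * ⟪F (y i), x - xstar⟫_ℝ) + β i ^ 2 * ‖F (y i)‖ ^ 2 := hexp
      _ ≤ ‖x - xstar‖ ^ 2 - c ^ 2 / ‖F (y i)‖ ^ 2 := by rw [h6]; linarith
  by_cases hFx : F x = 0
  · have hb : ∀ i, ‖xplus i - xstar‖ ^ 2 ≤ ‖x - xstar‖ ^ 2 := by
      intro i
      refine (key i).trans ?_
      have hN : (0:ℝ) < ‖F (y i)‖ ^ 2 := by
        have := norm_pos_iff.mpr (hFy i); positivity
      have : 0 ≤ ⟪F (y i), x - y i⟫_ℝ ^ 2 / ‖F (y i)‖ ^ 2 := by positivity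
      linarith
    have hsum : ∑ i, (l i ^ γ / T) * ‖xplus i - xstar‖ ^ 2
        ≤ ∑ i, (l i ^ γ / T) * ‖x - xstar‖ ^ 2 :=
      Finset.sum_le_sum fun i _ => mul_le_mul_of_nonneg_left (hb i) (hpnn i)
    rw [← Finset.sum_mul, hpsum, one_mul] at hsum
    have hz : ρ ^ 2 * (1 - ρ) ^ 2 * (∑ i, l i ^ γ * ((F x i) ^ 2) ^ 2) /
        (T * (lmax + ρ * L) ^ 2 * ‖F x‖ ^ 2) = 0 := by
      have hn : ‖F x‖ = 0 := by rw [hFx, norm_zero]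
      rw [hn]
      norm_num
    rw [hz]
    linarith
  · have hFxn : 0 < ‖F x‖ := norm_pos_iff.mpr hFx
    have hlL : (0:ℝ) < lmax + ρ * L := by positivity
    have key2 : ∀ i, ‖xplus i - xstar‖ ^ 2
        ≤ ‖x - xstar‖ ^ 2
          - ρ ^ 2 * (1 - ρ) ^ 2 * ((F x i) ^ 2) ^ 2 / ((lmax + ρ * L) ^ 2 * ‖F x‖ ^ 2) := by
      intro i
      refine (key i).trans ?_
      have hN : (0:ℝ) < ‖F (y i)‖ ^ 2 := by
        have := norm_pos_iff.mpr (hFy i); positivity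
      have h1ρ : (0:ℝ) ≤ 1 - ρ := by linarith
      have ha : (0:ℝ) ≤ ρ / l i * ((1 - ρ) * F x i ^ 2) :=
        mul_nonneg (div_pos hρ0 (hl i)).le (mul_nonneg h1ρ (sq_nonneg _))
      have h1 : (ρ / l i * ((1 - ρ) * F x i ^ 2)) ^ 2 ≤ ⟪F (y i), x - y i⟫_ℝ ^ 2 :=
        pow_le_pow_left₀ ha (hc_lb i) 2
      have h2 : ‖F (y i)‖ ^ 2 ≤ ((lmax + ρ * L) / l i * ‖F x‖) ^ 2 :=
        pow_le_pow_left₀ (norm_nonneg _) (hFy_ub i) 2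
      have hd : ρ ^ 2 * (1 - ρ) ^ 2 * ((F x i) ^ 2) ^ 2 / ((lmax + ρ * L) ^ 2 * ‖F x‖ ^ 2)
          ≤ ⟪F (y i), x - y i⟫_ℝ ^ 2 / ‖F (y i)‖ ^ 2 := by
        have heq : ρ ^ 2 * (1 - ρ) ^ 2 * ((F x i) ^ 2) ^ 2 / ((lmax + ρ * L) ^ 2 * ‖F x‖ ^ 2)
            = (ρ / l i * ((1 - ρ) * F x i ^ 2)) ^ 2 / ((lmax + ρ * L) / l i * ‖F x‖) ^ 2 := by
          rw [show ρ / l i * ((1 - ρ) * F x i ^ 2) = ρ * ((1 - ρ) * F x i ^ 2) / l i by ring,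
            show (lmax + ρ * L) / l i * ‖F x‖ = (lmax + ρ * L) * ‖F x‖ / l i by ring,
            div_pow, div_pow, div_div_div_cancel_right₀ (pow_ne_zero 2 (hl i).ne')]
          ring
        rw [heq]
        exact div_le_div₀ (sq_nonneg _) h1 hN h2
      linarith
    have hsum : ∑ i, (l i ^ γ / T) * ‖xplus i - xstar‖ ^ 2
        ≤ ∑ i, (l i ^ γ / T) * (‖x - xstar‖ ^ 2
          - ρ ^ 2 * (1 - ρ) ^ 2 * ((F x i) ^ 2) ^ 2 / ((lmax + ρ * L) ^ 2 * ‖F x‖ ^ 2)) :=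
      Finset.sum_le_sum fun i _ => mul_le_mul_of_nonneg_left (key2 i) (hpnn i)
    have hexp2 : ∑ i, (l i ^ γ / T) * (‖x - xstar‖ ^ 2
          - ρ ^ 2 * (1 - ρ) ^ 2 * ((F x i) ^ 2) ^ 2 / ((lmax + ρ * L) ^ 2 * ‖F x‖ ^ 2))
        = ‖x - xstar‖ ^ 2 - ∑ i, (l i ^ γ / T) *
            (ρ ^ 2 * (1 - ρ) ^ 2 * ((F x i) ^ 2) ^ 2 / ((lmax + ρ * L) ^ 2 * ‖F x‖ ^ 2)) := by
      rw [Finset.sum_congr rfl fun i _ => mul_sub (l i ^ γ / T) _ _,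
        Finset.sum_sub_distrib, ← Finset.sum_mul, hpsum, one_mul]
    have hLHS : ρ ^ 2 * (1 - ρ) ^ 2 * (∑ i, l i ^ γ * ((F x i) ^ 2) ^ 2) /
          (T * (lmax + ρ * L) ^ 2 * ‖F x‖ ^ 2)
        = ∑ i, (l i ^ γ / T) *
            (ρ ^ 2 * (1 - ρ) ^ 2 * ((F x i) ^ 2) ^ 2 / ((lmax + ρ * L) ^ 2 * ‖F x‖ ^ 2)) := by
      rw [Finset.mul_sum, Finset.sum_div]
      refine Finset.sum_congr rfl fun i _ => ?_
      field_simp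
    rw [hLHS]
    linarith
end

section
/- Let F : ℝ^n → ℝ^n be monotone, L-Lipschitz continuous, and componentwise Lipschitz continuous with constants l_1, …, l_n > 0, and set l_max = max_{1≤i≤n} l_i. Let x* ∈ ℝ^n satisfy F(x*) = 0, let P : ℝ^n → ℝ^n be 1-Lipschitz with P(x*) = x*, and fix ρ ∈ (0,1). Let {x_k} be generated by any Mini-EG iteration with an arbitrary sequence of indices i_k ∈ {1,…,n}: y_k = x_k − (ρ/l_{i_k}) F_{i_k}(x_k) e_{i_k}, β_k = ⟨F(y_k), x_k − y_k⟩ / ‖F(y_k)‖², x_{k+1} = P(x_k − β_k F(y_k)), where F(y_k) ≠ 0 for all k. Then for every integer K ≥ 0: min_{0≤k≤K} ( |F_{i_k}(x_k)|⁴ / ‖F(x_k)‖² ) ≤ (l_max + ρL)² / (ρ²(1−ρ)²(K+1)) · ‖x_0 − x*‖². -/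
open scoped InnerProductSpace

set_option maxHeartbeats 1000000 in
/-- Rate of a Mini-EG iteration with an arbitrary index sequence: for every
`K ≥ 0`, `min_{0 ≤ k ≤ K} |F_{i_k}(x_k)|⁴ / ‖F(x_k)‖² ≤
(l_max + ρL)² / (ρ²(1-ρ)²(K+1)) ‖x_0 - x*‖²`. -/
theorem stmt_12 {n : ℕ} (F : EuclideanSpace ℝ (Fin n) → EuclideanSpace ℝ (Fin n))
    (hmono : ∀ x y : EuclideanSpace ℝ (Fin n), 0 ≤ ⟪F x - F y, x - y⟫_ℝ)
    (L : ℝ) (hL : 0 < L)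
    (hLip : ∀ x y : EuclideanSpace ℝ (Fin n), ‖F x - F y‖ ≤ L * ‖x - y‖)
    (l : Fin n → ℝ) (hl : ∀ i, 0 < l i)
    (hCLip : ∀ (i : Fin n) (x : EuclideanSpace ℝ (Fin n)) (t : ℝ),
      |F (x + EuclideanSpace.single i t) i - F x i| ≤ l i * |t|)
    (lmax : ℝ) (hlmax : IsGreatest (Set.range l) lmax)
    (xstar : EuclideanSpace ℝ (Fin n)) (hstar : F xstar = 0)
    (P : EuclideanSpace ℝ (Fin n) → EuclideanSpace ℝ (Fin n))
    (hP : ∀ x y : EuclideanSpace ℝ (Fin n), ‖P x - P y‖ ≤ ‖x - y‖)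
    (hPfix : P xstar = xstar)
    (ρ : ℝ) (hρ : ρ ∈ Set.Ioo (0 : ℝ) 1)
    (x y : ℕ → EuclideanSpace ℝ (Fin n)) (ik : ℕ → Fin n) (β : ℕ → ℝ)
    (hy : ∀ k, y k = x k - EuclideanSpace.single (ik k) (ρ / l (ik k) * F (x k) (ik k)))
    (hFy : ∀ k, F (y k) ≠ 0)
    (hβ : ∀ k, β k = ⟪F (y k), x k - y k⟫_ℝ / ‖F (y k)‖ ^ 2)
    (hx : ∀ k, x (k + 1) = P (x k - β k • F (y k))) :
    ∀ K : ℕ, ∃ k ≤ K,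
      |F (x k) (ik k)| ^ 4 / ‖F (x k)‖ ^ 2 ≤
        (lmax + ρ * L) ^ 2 / (ρ ^ 2 * (1 - ρ) ^ 2 * (K + 1)) * ‖x 0 - xstar‖ ^ 2 := by
  obtain ⟨hρ0, hρ1⟩ := hρ
  obtain ⟨j, hj⟩ := hlmax.1
  have hlmax_pos : 0 < lmax := hj ▸ hl j
  have hM : 0 < lmax + ρ * L := by positivity
  set c : ℝ := ρ ^ 2 * (1 - ρ) ^ 2 / (lmax + ρ * L) ^ 2 with hc_def
  have hc : 0 < c := by
    apply div_pos (mul_pos (pow_pos hρ0 2) (pow_pos (by linarith) 2)) (by positivity)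
  -- key per-step inequality
  have key : ∀ k, c * (|F (x k) (ik k)| ^ 4 / ‖F (x k)‖ ^ 2) ≤
      ‖x k - xstar‖ ^ 2 - ‖x (k + 1) - xstar‖ ^ 2 := by
    intro k
    set i := ik k with hi
    set s : ℝ := F (x k) i with hs
    set t : ℝ := ρ / l i * s with ht
    set g := F (y k) with hg
    set a : ℝ := ⟪g, x k - y k⟫_ℝ with ha_def
    set N : ℝ := ‖g‖ with hN_def
    have hNpos : 0 < N := norm_pos_iff.mpr (hFy k)
    have hli : 0 < l i := hl i
    have hlile : l i ≤ lmax := hlmax.2 ⟨i, rfl⟩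
    have hsub : x k - y k = EuclideanSpace.single i t := by
      rw [hy k]; abel
    have hxy : x k = y k + EuclideanSpace.single i t := by
      rw [hy k]; abel
    -- componentwise Lipschitz bound
    have hcomp : |g i - s| ≤ ρ * |s| := by
      have h := hCLip i (y k) t
      rw [← hxy] at h
      calc |g i - s| = |s - g i| := abs_sub_comm _ _
        _ ≤ l i * |t| := h
        _ = ρ * |s| := by
            rw [ht, abs_mul, abs_of_pos (div_pos hρ0 hli)]
            field_simp
    -- inner product value
    have ha_eq : a = ρ / l i * (s * g i) := by
      rw [ha_def, hsub, EuclideanSpace.inner_single_right]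
      simp [ht, mul_comm, mul_assoc, mul_left_comm]
    have hsg : (1 - ρ) * s ^ 2 ≤ s * g i := by
      have h1 : |s * (g i - s)| ≤ ρ * s ^ 2 := by
        rw [abs_mul]
        calc |s| * |g i - s| ≤ |s| * (ρ * |s|) :=
              mul_le_mul_of_nonneg_left hcomp (abs_nonneg s)
          _ = ρ * s ^ 2 := by rw [← sq_abs]; ring
      have h2 := neg_abs_le (s * (g i - s))
      nlinarith [h1, h2]
    have hq : (0:ℝ) < ρ * (1 - ρ) / l i := by
      apply div_pos (by nlinarith) hli
    have ha_lb : ρ * (1 - ρ) / l i * s ^ 2 ≤ a := by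
      rw [ha_eq]
      have : ρ / l i * ((1 - ρ) * s ^ 2) ≤ ρ / l i * (s * g i) :=
        mul_le_mul_of_nonneg_left hsg (le_of_lt (div_pos hρ0 hli))
      calc ρ * (1 - ρ) / l i * s ^ 2 = ρ / l i * ((1 - ρ) * s ^ 2) := by ring
        _ ≤ _ := this
    have ha_nn : 0 ≤ a := le_trans (by positivity) ha_lb
    -- component bound: |s| ≤ ‖F (x k)‖
    have hcompnorm : |s| ≤ ‖F (x k)‖ := by
      have h1 : ⟪EuclideanSpace.single i (1:ℝ), F (x k)⟫_ℝ = s := by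
        rw [EuclideanSpace.inner_single_left]; simp [hs]
      calc |s| = |⟪EuclideanSpace.single i (1:ℝ), F (x k)⟫_ℝ| := by rw [h1]
        _ ≤ ‖EuclideanSpace.single i (1:ℝ)‖ * ‖F (x k)‖ := abs_real_inner_le_norm _ _
        _ = ‖F (x k)‖ := by rw [EuclideanSpace.norm_single]; simp
    -- norm bound on g
    have hyx : ‖y k - x k‖ = ρ / l i * |s| := by
      rw [hy k]
      have : x k - EuclideanSpace.single i t - x k = -(EuclideanSpace.single i t) := by abel
      rw [this, norm_neg, EuclideanSpace.norm_single, ht, Real.norm_eq_abs, abs_mul,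
        abs_of_pos (div_pos hρ0 hli)]
    have hNle : N ≤ (lmax + ρ * L) / l i * ‖F (x k)‖ := by
      have h1 : ‖g - F (x k)‖ ≤ L * ‖y k - x k‖ := hLip (y k) (x k)
      have h2 : N ≤ ‖F (x k)‖ + ‖g - F (x k)‖ := by
        calc N = ‖F (x k) + (g - F (x k))‖ := by rw [hN_def]; congr 1; abel
          _ ≤ ‖F (x k)‖ + ‖g - F (x k)‖ := norm_add_le _ _
      have h3 : L * ‖y k - x k‖ ≤ L * (ρ / l i) * ‖F (x k)‖ := by
        rw [hyx]
        have h4 := mul_le_mul_of_nonneg_left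
          (mul_le_mul_of_nonneg_left hcompnorm (le_of_lt (div_pos hρ0 hli))) hL.le
        linarith [h4]
      have hFn : 0 ≤ ‖F (x k)‖ := norm_nonneg _
      have : (1 + L * (ρ / l i)) * ‖F (x k)‖ ≤ (lmax + ρ * L) / l i * ‖F (x k)‖ := by
        apply mul_le_mul_of_nonneg_right _ hFn
        rw [le_div_iff₀ hli]
        have he : (1 + L * (ρ / l i)) * l i = l i + ρ * L := by
          field_simp
        rw [he]
        linarith
      linarith
    -- step A : c * D ≤ a^2 / N^2
    have habs4 : |s| ^ 4 = s ^ 4 := by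
      rw [show (4:ℕ) = 2 * 2 by rfl, pow_mul, pow_mul, sq_abs]
    have stepA : c * (|s| ^ 4 / ‖F (x k)‖ ^ 2) ≤ a ^ 2 / N ^ 2 := by
      rw [habs4]
      by_cases hFx : F (x k) = 0
      · have hs0 : s = 0 := by rw [hs, hFx]; rfl
        rw [hs0]
        simp only [ne_eq, OfNat.ofNat_ne_zero, not_false_eq_true, zero_pow, zero_div,
          mul_zero]
        positivity
      · have hFxn : 0 < ‖F (x k)‖ := norm_pos_iff.mpr hFx
        rw [mul_div_assoc' , div_le_div_iff₀ (by positivity) (by positivity)]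
        -- (c * s^4) * N^2 ≤ a^2 * ‖F x‖^2
        set q : ℝ := ρ * (1 - ρ) / l i with hq_def
        have h1 : (q * s ^ 2) ^ 2 ≤ a ^ 2 := by
          apply pow_le_pow_left₀ (by positivity) ha_lb
        have h2 : N ^ 2 ≤ ((lmax + ρ * L) / l i) ^ 2 * ‖F (x k)‖ ^ 2 := by
          rw [← mul_pow]
          exact pow_le_pow_left₀ hNpos.le hNle 2
        have hid : c * ((lmax + ρ * L) / l i) ^ 2 = q ^ 2 := by
          rw [hc_def, hq_def]
          field_simp
        have hs4 : (0:ℝ) ≤ s ^ 4 := by positivity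
        calc c * s ^ 4 * N ^ 2 ≤ c * s ^ 4 * (((lmax + ρ * L) / l i) ^ 2 * ‖F (x k)‖ ^ 2) := by
              apply mul_le_mul_of_nonneg_left h2 (by positivity)
          _ = (q * s ^ 2) ^ 2 * ‖F (x k)‖ ^ 2 := by
              linear_combination s ^ 4 * ‖F (x k)‖ ^ 2 * hid
          _ ≤ a ^ 2 * ‖F (x k)‖ ^ 2 := by
              apply mul_le_mul_of_nonneg_right h1 (by positivity)
    -- step B : a^2/N^2 ≤ ‖x k - x*‖^2 - ‖x (k+1) - x*‖^2
    have hβk : β k = a / N ^ 2 := hβ k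
    have hβnn : 0 ≤ β k := by rw [hβk]; positivity
    have hmon : 0 ≤ ⟪g, y k - xstar⟫_ℝ := by
      have := hmono (y k) xstar
      rwa [hstar, sub_zero] at this
    have hinner : a ≤ ⟪g, x k - xstar⟫_ℝ := by
      have : ⟪g, x k - xstar⟫_ℝ = a + ⟪g, y k - xstar⟫_ℝ := by
        rw [ha_def, ← inner_add_right]
        congr 1
        abel
      linarith
    have hstep : ‖x (k + 1) - xstar‖ ≤ ‖x k - β k • g - xstar‖ := by
      rw [hx k]
      calc ‖P (x k - β k • g) - xstar‖ = ‖P (x k - β k • g) - P xstar‖ := by rw [hPfix]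
        _ ≤ ‖x k - β k • g - xstar‖ := hP _ _
    have hexp : ‖x k - β k • g - xstar‖ ^ 2 =
        ‖x k - xstar‖ ^ 2 - 2 * β k * ⟪g, x k - xstar⟫_ℝ + β k ^ 2 * N ^ 2 := by
      have h0 : x k - β k • g - xstar = (x k - xstar) - β k • g := by abel
      rw [h0, norm_sub_sq_real, real_inner_smul_right, norm_smul, Real.norm_eq_abs,
        mul_pow, sq_abs, real_inner_comm]
      ring
    have stepB : a ^ 2 / N ^ 2 ≤ ‖x k - xstar‖ ^ 2 - ‖x (k + 1) - xstar‖ ^ 2 := by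
      have h1 : ‖x (k + 1) - xstar‖ ^ 2 ≤ ‖x k - β k • g - xstar‖ ^ 2 :=
        pow_le_pow_left₀ (norm_nonneg _) hstep 2
      have h2 : 2 * β k * a ≤ 2 * β k * ⟪g, x k - xstar⟫_ℝ := by
        apply mul_le_mul_of_nonneg_left hinner (by linarith)
      have h3 : β k * a = a ^ 2 / N ^ 2 := by
        rw [hβk]; field_simp
      have h4 : β k ^ 2 * N ^ 2 = a ^ 2 / N ^ 2 := by
        rw [hβk]; field_simp
      linarith [hexp, h1, h2, h3, h4]
    exact le_trans stepA stepB
  -- summation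
  intro K
  set S : ℝ := ‖x 0 - xstar‖ ^ 2 with hS
  have hSnn : 0 ≤ S := by positivity
  set D : ℕ → ℝ := fun k => |F (x k) (ik k)| ^ 4 / ‖F (x k)‖ ^ 2 with hD
  have hsum : ∑ k ∈ Finset.range (K + 1), c * D k ≤ S := by
    calc ∑ k ∈ Finset.range (K + 1), c * D k
        ≤ ∑ k ∈ Finset.range (K + 1), (‖x k - xstar‖ ^ 2 - ‖x (k + 1) - xstar‖ ^ 2) :=
          Finset.sum_le_sum fun k _ => key k
      _ = ‖x 0 - xstar‖ ^ 2 - ‖x (K + 1) - xstar‖ ^ 2 := Finset.sum_range_sub' _ _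
      _ ≤ S := by rw [hS]; linarith [sq_nonneg ‖x (K + 1) - xstar‖]
  have hKpos : (0:ℝ) < (K : ℝ) + 1 := by positivity
  have hsum2 : ∑ k ∈ Finset.range (K + 1), c * D k ≤
      ∑ _k ∈ Finset.range (K + 1), S / ((K : ℝ) + 1) := by
    rw [Finset.sum_const, Finset.card_range, nsmul_eq_mul]
    have h5 : ((K + 1 : ℕ) : ℝ) * (S / ((K : ℝ) + 1)) = S := by
      push_cast
      field_simp
    rw [h5]
    exact hsum
  obtain ⟨k, hk, hle⟩ := Finset.exists_le_of_sum_le (s := Finset.range (K + 1))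
    (f := fun k => c * D k) (g := fun _ => S / ((K : ℝ) + 1))
    Finset.nonempty_range_add_one hsum2
  refine ⟨k, Nat.lt_succ_iff.mp (Finset.mem_range.mp hk), ?_⟩
  have hDle : D k ≤ S / ((K : ℝ) + 1) / c := by
    rw [le_div_iff₀ hc, mul_comm]
    exact hle
  calc |F (x k) (ik k)| ^ 4 / ‖F (x k)‖ ^ 2 = D k := rfl
    _ ≤ S / ((K : ℝ) + 1) / c := hDle
    _ = (lmax + ρ * L) ^ 2 / (ρ ^ 2 * (1 - ρ) ^ 2 * (K + 1)) * S := by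
        rw [hc_def]
        field_simp
    _ = _ := by rw [hS]
end

section
/- Let F : ℝ^n → ℝ^n be monotone, L-Lipschitz continuous, and componentwise Lipschitz continuous with constants l_1, …, l_n > 0, and set l_max = max_{1≤i≤n} l_i. Let x* ∈ ℝ^n satisfy F(x*) = 0, let P : ℝ^n → ℝ^n be 1-Lipschitz with P(x*) = x*, and fix ρ ∈ (0,1). Let x ∈ ℝ^n and let j, r ∈ {1,…,n} be two candidate indices. Define the Watchdog-Max index i as i = j if |F_j(x)| ≥ |F_r(x)| and i = r otherwise; define y = x − (ρ/l_i) F_i(x) e_i, assume F(y) ≠ 0, set β = ⟨F(y), x − y⟩ / ‖F(y)‖², and x⁺ = P(x − β F(y)). Then ‖x − x*‖² − ‖x⁺ − x*‖² ≥ ρ²(1−ρ)² |F_r(x)|⁴ / ( (l_max + ρL)² ‖F(x)‖² ). -/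
open scoped InnerProductSpace

set_option maxHeartbeats 1000000 in
/-- Per-step estimate for the Watchdog-Max method: with index
`i = j` if `|F_j(x)| ≥ |F_r(x)|` and `i = r` otherwise, the mini-extragradient
step followed by the adaptive update satisfies
`‖x - x*‖² - ‖x⁺ - x*‖² ≥ ρ²(1-ρ)²|F_r(x)|⁴ / ((l_max + ρL)² ‖F(x)‖²)`. -/
theorem stmt_13 {n : ℕ} (F : EuclideanSpace ℝ (Fin n) → EuclideanSpace ℝ (Fin n))
    (hmono : ∀ x y : EuclideanSpace ℝ (Fin n), 0 ≤ ⟪F x - F y, x - y⟫_ℝ)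
    (L : ℝ) (hL : 0 < L)
    (hLip : ∀ x y : EuclideanSpace ℝ (Fin n), ‖F x - F y‖ ≤ L * ‖x - y‖)
    (l : Fin n → ℝ) (hl : ∀ i, 0 < l i)
    (hCLip : ∀ (i : Fin n) (x : EuclideanSpace ℝ (Fin n)) (t : ℝ),
      |F (x + EuclideanSpace.single i t) i - F x i| ≤ l i * |t|)
    (lmax : ℝ) (hlmax : IsGreatest (Set.range l) lmax)
    (xstar : EuclideanSpace ℝ (Fin n)) (hstar : F xstar = 0)
    (P : EuclideanSpace ℝ (Fin n) → EuclideanSpace ℝ (Fin n))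
    (hP : ∀ x y : EuclideanSpace ℝ (Fin n), ‖P x - P y‖ ≤ ‖x - y‖)
    (hPfix : P xstar = xstar)
    (ρ : ℝ) (hρ : ρ ∈ Set.Ioo (0 : ℝ) 1)
    (x : EuclideanSpace ℝ (Fin n)) (j r i : Fin n)
    (hi : i = if |F x r| ≤ |F x j| then j else r)
    (y : EuclideanSpace ℝ (Fin n))
    (hy : y = x - EuclideanSpace.single i (ρ / l i * F x i))
    (hFy : F y ≠ 0)
    (β : ℝ) (hβ : β = ⟪F y, x - y⟫_ℝ / ‖F y‖ ^ 2)
    (xplus : EuclideanSpace ℝ (Fin n)) (hxplus : xplus = P (x - β • F y)) :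
    ρ ^ 2 * (1 - ρ) ^ 2 * |F x r| ^ 4 / ((lmax + ρ * L) ^ 2 * ‖F x‖ ^ 2) ≤
      ‖x - xstar‖ ^ 2 - ‖xplus - xstar‖ ^ 2 := by
  obtain ⟨hρ0, hρ1⟩ := hρ
  have h1ρ : (0:ℝ) < 1 - ρ := by linarith
  have hli : 0 < l i := hl i
  have hline : l i ≠ 0 := hli.ne'
  set c : ℝ := ρ / l i * F x i with hc
  have hxy : x - y = EuclideanSpace.single i c := by rw [hy, sub_sub_cancel]
  have hri : |F x r| ≤ |F x i| := by
    rcases le_or_gt (|F x r|) (|F x j|) with h | h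
    · rw [hi, if_pos h]; exact h
    · rw [hi, if_neg (not_le.mpr h)]
  have hyalt : y = x + EuclideanSpace.single i (-c) := by
    rw [hy]
    apply PiLp.ext
    intro k
    simp only [PiLp.sub_apply, PiLp.add_apply, EuclideanSpace.single_apply, sub_eq_add_neg]
    split_ifs <;> simp_all
  have hcomp : |F y i - F x i| ≤ ρ * |F x i| := by
    have h := hCLip i x (-c)
    rw [← hyalt] at h
    calc |F y i - F x i| ≤ l i * |(-c)| := h
      _ = ρ * |F x i| := by
        rw [abs_neg, hc, abs_mul, abs_div, abs_of_pos hρ0, abs_of_pos hli]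
        field_simp
  have hprod : (1 - ρ) * (F x i) ^ 2 ≤ F x i * F y i := by
    have habs : |F x i * (F y i - F x i)| ≤ |F x i| * (ρ * |F x i|) := by
      rw [abs_mul]; exact mul_le_mul_of_nonneg_left hcomp (abs_nonneg _)
    nlinarith [neg_abs_le (F x i * (F y i - F x i)), sq_abs (F x i)]
  set s : ℝ := ⟪F y, x - y⟫_ℝ with hs
  have hsval : s = c * F y i := by
    rw [hs, hxy, EuclideanSpace.inner_single_right]
    simp [mul_comm]
  have hslow : ρ * (1 - ρ) / l i * (F x i) ^ 2 ≤ s := by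
    rw [hsval, hc]
    have hfac : (0:ℝ) < ρ / l i := div_pos hρ0 hli
    calc ρ * (1 - ρ) / l i * (F x i) ^ 2 = ρ / l i * ((1 - ρ) * (F x i) ^ 2) := by ring
      _ ≤ ρ / l i * (F x i * F y i) := mul_le_mul_of_nonneg_left hprod hfac.le
      _ = ρ / l i * F x i * F y i := by ring
  have hs0 : 0 ≤ s := le_trans (by positivity) hslow
  have hFyn : (0:ℝ) < ‖F y‖ := norm_pos_iff.mpr hFy
  have hFx0 : F x ≠ 0 := by
    intro h
    apply hFy
    have hc0 : c = 0 := by simp [hc, h]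
    rw [hy, hc0]
    have h0 : EuclideanSpace.single i (0:ℝ) = 0 := by
      apply PiLp.ext; intro k; simp
    rw [h0, sub_zero, h]
  have hFxn : (0:ℝ) < ‖F x‖ := norm_pos_iff.mpr hFx0
  have habsle : |F x i| ≤ ‖F x‖ := by
    have h := abs_real_inner_le_norm (EuclideanSpace.single i (1:ℝ)) (F x)
    rw [EuclideanSpace.inner_single_left] at h
    simpa using h
  have hnxy : ‖x - y‖ = ρ / l i * |F x i| := by
    rw [hxy, EuclideanSpace.norm_single, Real.norm_eq_abs, hc, abs_mul, abs_div,
      abs_of_pos hρ0, abs_of_pos hli]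
  have hFybound : l i * ‖F y‖ ≤ (l i + ρ * L) * ‖F x‖ := by
    have h1 : ‖F y‖ - ‖F x‖ ≤ ‖F y - F x‖ := norm_sub_norm_le (F y) (F x)
    have h2 : ‖F y - F x‖ ≤ L * ‖x - y‖ := by
      have h := hLip y x
      rwa [show ‖y - x‖ = ‖x - y‖ from norm_sub_rev y x] at h
    have h3 : ‖F y‖ ≤ ‖F x‖ + L * (ρ / l i * |F x i|) := by
      rw [← hnxy]; linarith
    have h4 : L * (ρ / l i * |F x i|) ≤ L * (ρ / l i * ‖F x‖) := by
      have hpos : (0:ℝ) ≤ L * (ρ / l i) := by positivity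
      nlinarith
    have h6 : l i * (L * (ρ / l i * ‖F x‖)) = ρ * L * ‖F x‖ := by
      field_simp
    have h7 : l i * ‖F y‖ ≤ l i * (‖F x‖ + L * (ρ / l i * ‖F x‖)) :=
      mul_le_mul_of_nonneg_left (by linarith) hli.le
    calc l i * ‖F y‖ ≤ l i * ‖F x‖ + l i * (L * (ρ / l i * ‖F x‖)) := by
          rw [← mul_add]; exact h7
      _ = (l i + ρ * L) * ‖F x‖ := by rw [h6]; ring
  have hmonoy : 0 ≤ ⟪F y, y - xstar⟫_ℝ := by
    have h := hmono y xstar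
    rwa [hstar, sub_zero] at h
  have hinner : s ≤ ⟪F y, x - xstar⟫_ℝ := by
    have h : ⟪F y, x - xstar⟫_ℝ = ⟪F y, x - y⟫_ℝ + ⟪F y, y - xstar⟫_ℝ := by
      rw [← inner_add_right]
      congr 1
      abel
    rw [h, ← hs]
    linarith
  have hN : (0:ℝ) < ‖F y‖ ^ 2 := by positivity
  have hNne : ‖F y‖ ^ 2 ≠ 0 := hN.ne'
  have hβval : β = s / ‖F y‖ ^ 2 := hβ
  have hβ0 : 0 ≤ β := by rw [hβval]; exact div_nonneg hs0 hN.le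
  have hkey : s ^ 2 / ‖F y‖ ^ 2 ≤ ‖x - xstar‖ ^ 2 - ‖xplus - xstar‖ ^ 2 := by
    have hP1 : ‖xplus - xstar‖ ≤ ‖x - β • F y - xstar‖ := by
      calc ‖xplus - xstar‖ = ‖P (x - β • F y) - P xstar‖ := by rw [hxplus, hPfix]
        _ ≤ ‖x - β • F y - xstar‖ := hP _ _
    have hP2 : ‖xplus - xstar‖ ^ 2 ≤ ‖x - β • F y - xstar‖ ^ 2 :=
      pow_le_pow_left₀ (norm_nonneg _) hP1 2
    have hexp : ‖x - β • F y - xstar‖ ^ 2 =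
        ‖x - xstar‖ ^ 2 - 2 * (β * ⟪F y, x - xstar⟫_ℝ) + β ^ 2 * ‖F y‖ ^ 2 := by
      have hrw : x - β • F y - xstar = (x - xstar) - β • F y := by abel
      rw [hrw, norm_sub_sq_real, real_inner_smul_right, norm_smul, Real.norm_eq_abs,
        mul_pow, sq_abs, real_inner_comm (x - xstar) (F y)]
    have h1 : β * s ≤ β * ⟪F y, x - xstar⟫_ℝ := mul_le_mul_of_nonneg_left hinner hβ0
    have h3 : β * s = s ^ 2 / ‖F y‖ ^ 2 := by
      rw [hβval, div_mul_eq_mul_div, ← pow_two]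
    have h4 : β ^ 2 * ‖F y‖ ^ 2 = s ^ 2 / ‖F y‖ ^ 2 := by
      rw [hβval, div_pow, div_mul_eq_mul_div, pow_two (‖F y‖ ^ 2), ← div_div,
        mul_div_assoc, div_self hNne, mul_one]
    have hub : ‖x - β • F y - xstar‖ ^ 2 ≤ ‖x - xstar‖ ^ 2 - s ^ 2 / ‖F y‖ ^ 2 := by
      rw [hexp]
      linarith
    linarith
  refine le_trans ?_ hkey
  have hlm : l i ≤ lmax := hlmax.2 ⟨i, rfl⟩
  have hlm0 : 0 < lmax := lt_of_lt_of_le hli hlm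
  have hden2 : (0:ℝ) < (lmax + ρ * L) ^ 2 * ‖F x‖ ^ 2 := by positivity
  have hdenle : l i ^ 2 * ‖F y‖ ^ 2 ≤ (lmax + ρ * L) ^ 2 * ‖F x‖ ^ 2 := by
    have h1 : (l i * ‖F y‖) ^ 2 ≤ ((l i + ρ * L) * ‖F x‖) ^ 2 :=
      pow_le_pow_left₀ (by positivity) hFybound 2
    have h2 : ((l i + ρ * L) * ‖F x‖) ^ 2 ≤ ((lmax + ρ * L) * ‖F x‖) ^ 2 := by
      apply pow_le_pow_left₀ (by positivity)
      nlinarith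
    calc l i ^ 2 * ‖F y‖ ^ 2 = (l i * ‖F y‖) ^ 2 := by ring
      _ ≤ ((lmax + ρ * L) * ‖F x‖) ^ 2 := le_trans h1 h2
      _ = (lmax + ρ * L) ^ 2 * ‖F x‖ ^ 2 := by ring
  have hnumle : ρ ^ 2 * (1 - ρ) ^ 2 * |F x r| ^ 4 ≤ s ^ 2 * l i ^ 2 := by
    have h1 : |F x r| ^ 4 ≤ |F x i| ^ 4 := pow_le_pow_left₀ (abs_nonneg _) hri 4
    have h2 : (0:ℝ) ≤ ρ * (1 - ρ) / l i * (F x i) ^ 2 := by positivity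
    have h3 : (ρ * (1 - ρ) / l i * (F x i) ^ 2) ^ 2 ≤ s ^ 2 := pow_le_pow_left₀ h2 hslow 2
    have h4 : (ρ * (1 - ρ) / l i * (F x i) ^ 2) ^ 2 * l i ^ 2
        = ρ ^ 2 * (1 - ρ) ^ 2 * (F x i) ^ 4 := by
      field_simp
    have h5 : (F x i) ^ 4 = |F x i| ^ 4 := by
      rw [show (4:ℕ) = 2 * 2 from rfl, pow_mul, pow_mul, sq_abs]
    calc ρ ^ 2 * (1 - ρ) ^ 2 * |F x r| ^ 4
        ≤ ρ ^ 2 * (1 - ρ) ^ 2 * |F x i| ^ 4 :=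
          mul_le_mul_of_nonneg_left h1 (by positivity)
      _ = (ρ * (1 - ρ) / l i * (F x i) ^ 2) ^ 2 * l i ^ 2 := by rw [h4, h5]
      _ ≤ s ^ 2 * l i ^ 2 := mul_le_mul_of_nonneg_right h3 (sq_nonneg _)
  rw [div_le_div_iff₀ hden2 hN]
  nlinarith [mul_le_mul_of_nonneg_right hnumle (sq_nonneg ‖F y‖),
    mul_le_mul_of_nonneg_left hdenle (sq_nonneg s)]
end
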